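/- arXiv:2011.13034 — 9 statements merged into one kernel-verified Lean document; each statement's English description precedes it below -/
import Mathlib

section
/- Let $p, \hat p$ be probability distributions on a finite state space $\mathcal{S}$ with $|\mathcal{S}| = S$, let $H \ge 1$, $N \ge 1$, $\iota > 0$, and suppose that for all $y \in \mathcal{S}$, $|\hat p(y) - p(y)| \le \sqrt{2 p(y)\iota / N} + 2\iota/(3N)$. Then for any functions $V_1, V_2 : \mathcal{S} \to \mathbb{R}$ with $0 \le V_1(y) \le V_2(y) \le H$ for all $y$, it holds that $\big|\sum_y (\hat p(y) - p(y))(V_2(y) - V_1(y))\big| \le \frac{1}{H}\sum_y p(y)(V_2(y) - V_1(y)) + \frac{2 H^2 S \iota}{N}$ (assuming $\iota \ge 1$). -/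
lemma sqrt_amgm (a b : ℝ) (ha : 0 ≤ a) (hb : 0 ≤ b) :
    Real.sqrt (a * b) ≤ (a + b) / 2 := by
  have h : a * b ≤ ((a + b) / 2) ^ 2 := by nlinarith [sq_nonneg (a - b)]
  calc Real.sqrt (a * b) ≤ Real.sqrt (((a + b) / 2) ^ 2) := Real.sqrt_le_sqrt h
    _ = (a + b) / 2 := Real.sqrt_sq (by positivity)

/-- Lower-order term bound: `|∑ (p̂-p)(V₂-V₁)| ≤ (1/H) ∑ p (V₂-V₁) + 2H²Sι/N`. -/
theorem stmt1 {S : Type*} [Fintype S]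
    (p q : S → ℝ) (hp0 : ∀ y, 0 ≤ p y) (hq0 : ∀ y, 0 ≤ q y)
    (hp1 : ∑ y, p y = 1) (hq1 : ∑ y, q y = 1)
    (H N ι : ℝ) (hH : 1 ≤ H) (hN : 1 ≤ N) (hι : 1 ≤ ι)
    (hconc : ∀ y, |q y - p y| ≤ Real.sqrt (2 * p y * ι / N) + 2 * ι / (3 * N))
    (V1 V2 : S → ℝ)
    (hV : ∀ y, 0 ≤ V1 y ∧ V1 y ≤ V2 y ∧ V2 y ≤ H) :
    |∑ y, (q y - p y) * (V2 y - V1 y)| ≤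
      (1 / H) * (∑ y, p y * (V2 y - V1 y)) +
        2 * H ^ 2 * (Fintype.card S : ℝ) * ι / N := by
  have hH0 : (0:ℝ) < H := lt_of_lt_of_le one_pos hH
  have hN0 : (0:ℝ) < N := lt_of_lt_of_le one_pos hN
  have hι0 : (0:ℝ) < ι := lt_of_lt_of_le one_pos hι
  have key : ∀ y, |(q y - p y) * (V2 y - V1 y)| ≤
      (1 / H) * (p y * (V2 y - V1 y)) + 2 * H ^ 2 * ι / N := by
    intro y
    obtain ⟨h1, h2, h3⟩ := hV y
    have hd : 0 ≤ V2 y - V1 y := by linarith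
    have hdH : V2 y - V1 y ≤ H := by linarith
    rw [abs_mul, abs_of_nonneg hd]
    have hsqrt : Real.sqrt (2 * p y * ι / N) ≤ p y / H + H * ι / (2 * N) := by
      have hab : 2 * p y * ι / N = (2 * p y / H) * (H * ι / N) := by
        field_simp
      calc Real.sqrt (2 * p y * ι / N)
          = Real.sqrt ((2 * p y / H) * (H * ι / N)) := by rw [hab]
        _ ≤ ((2 * p y / H) + (H * ι / N)) / 2 :=
            sqrt_amgm _ _ (div_nonneg (by linarith [hp0 y]) hH0.le) (by positivity)
        _ = p y / H + H * ι / (2 * N) := by ring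
    have habs : |q y - p y| ≤ p y / H + H * ι / (2 * N) + 2 * ι / (3 * N) :=
      le_trans (hconc y) (by linarith)
    have h0abs : 0 ≤ |q y - p y| := abs_nonneg _
    calc |q y - p y| * (V2 y - V1 y)
        ≤ (p y / H + H * ι / (2 * N) + 2 * ι / (3 * N)) * (V2 y - V1 y) := by
          exact mul_le_mul_of_nonneg_right habs hd
      _ = p y / H * (V2 y - V1 y) + (H * ι / (2 * N) + 2 * ι / (3 * N)) * (V2 y - V1 y) := by
          ring
      _ ≤ (1 / H) * (p y * (V2 y - V1 y)) + (H * ι / (2 * N) + 2 * ι / (3 * N)) * H := by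
          have : p y / H * (V2 y - V1 y) = (1 / H) * (p y * (V2 y - V1 y)) := by ring
          rw [this]
          gcongr
      _ ≤ (1 / H) * (p y * (V2 y - V1 y)) + 2 * H ^ 2 * ι / N := by
          have : (H * ι / (2 * N) + 2 * ι / (3 * N)) * H ≤ 2 * H ^ 2 * ι / N := by
            rw [div_add_div _ _ (by positivity : (2*N) ≠ 0) (by positivity : (3*N) ≠ 0),
              div_mul_eq_mul_div, div_le_div_iff₀ (by positivity) hN0]
            nlinarith [mul_nonneg (mul_nonneg (mul_nonneg hι0.le
              (mul_nonneg hN0.le hN0.le)) hH0.le) (by linarith : (0:ℝ) ≤ 9 * H - 4)]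
          linarith
  calc |∑ y, (q y - p y) * (V2 y - V1 y)|
      ≤ ∑ y, |(q y - p y) * (V2 y - V1 y)| := Finset.abs_sum_le_sum_abs _ _
    _ ≤ ∑ y, ((1 / H) * (p y * (V2 y - V1 y)) + 2 * H ^ 2 * ι / N) :=
        Finset.sum_le_sum fun y _ => key y
    _ = (1 / H) * (∑ y, p y * (V2 y - V1 y)) + 2 * H ^ 2 * (Fintype.card S : ℝ) * ι / N := by
        rw [Finset.sum_add_distrib, Finset.mul_sum, Finset.sum_const, Finset.card_univ,
          nsmul_eq_mul]
        ring
end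

section
/- Let $p, \hat p$ be probability distributions on a finite set $\mathcal{S}$ of size $S$, and for $V : \mathcal{S}\to\mathbb{R}$ define the variance $\|V\|^2_{\hat p} := \sum_y \hat p(y)(V(y) - \sum_z \hat p(z)V(z))^2$. Suppose $H \ge 1$, $N \ge 1$, $\iota \ge 1$, and for all $y$, $|\hat p(y) - p(y)| \le \sqrt{2p(y)\iota/N} + 2\iota/(3N)$. Then for any $V_1, V_2 : \mathcal{S}\to[0,H]$ with $V_1 \le V_2$ pointwise, $\|V_2 - V_1\|^2_{\hat p} \le 2\sum_y p(y)(V_2(y)-V_1(y))^2 + \frac{2H^2 S\iota}{N}$. -/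
/-- Empirical variance bound: `‖V₂-V₁‖²_{p̂} ≤ 2 ∑ p (V₂-V₁)² + 2H²Sι/N`. -/
theorem stmt3 {S : Type*} [Fintype S]
    (p q : S → ℝ) (hp0 : ∀ y, 0 ≤ p y) (hq0 : ∀ y, 0 ≤ q y)
    (hp1 : ∑ y, p y = 1) (hq1 : ∑ y, q y = 1)
    (H N ι : ℝ) (hH : 1 ≤ H) (hN : 1 ≤ N) (hι : 1 ≤ ι)
    (hconc : ∀ y, |q y - p y| ≤ Real.sqrt (2 * p y * ι / N) + 2 * ι / (3 * N))
    (V1 V2 : S → ℝ)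
    (hV : ∀ y, 0 ≤ V1 y ∧ V1 y ≤ V2 y ∧ V2 y ≤ H) :
    (∑ y, q y * ((V2 y - V1 y) - ∑ z, q z * (V2 z - V1 z)) ^ 2) ≤
      2 * (∑ y, p y * (V2 y - V1 y) ^ 2) +
        2 * H ^ 2 * (Fintype.card S : ℝ) * ι / N := by
  have hN0 : (0:ℝ) < N := by linarith
  set W : S → ℝ := fun y => V2 y - V1 y with hWdef
  have hW0 : ∀ y, 0 ≤ W y := fun y => by
    have h := hV y; simp only [hWdef]; linarith [h.1, h.2.1]
  have hWH : ∀ y, W y ≤ H := fun y => by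
    have h := hV y; simp only [hWdef]; linarith [h.1, h.2.2]
  -- Step 1: variance ≤ second moment
  have h1 : (∑ y, q y * (W y - ∑ z, q z * W z) ^ 2) ≤ ∑ y, q y * W y ^ 2 := by
    set m := ∑ z, q z * W z with hm
    have expand : (∑ y, q y * (W y - m) ^ 2)
        = (∑ y, q y * W y ^ 2) - 2 * m * (∑ y, q y * W y) + m ^ 2 * (∑ y, q y) := by
      rw [Finset.sum_congr rfl (fun y _ =>
        show q y * (W y - m) ^ 2
          = q y * W y ^ 2 - 2 * m * (q y * W y) + m ^ 2 * q y by ring),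
        Finset.sum_add_distrib, Finset.sum_sub_distrib, ← Finset.mul_sum,
        ← Finset.mul_sum]
    rw [expand, hq1, ← hm]
    nlinarith [sq_nonneg m]
  -- Step 2: per-term bound
  have h2 : ∀ y, q y * W y ^ 2 ≤ 2 * p y * W y ^ 2 + 2 * H ^ 2 * ι / N := by
    intro y
    have hc := hconc y
    have habs : q y ≤ p y + (Real.sqrt (2 * p y * ι / N) + 2 * ι / (3 * N)) := by
      have := abs_le.mp hc
      linarith [this.1, this.2]
    have hs0 : 0 ≤ Real.sqrt (2 * p y * ι / N) := Real.sqrt_nonneg _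
    have hpy := hp0 y
    have harg : (0:ℝ) ≤ 2 * p y * ι / N := by positivity
    set s := Real.sqrt (2 * p y * ι / N) with hsdef
    have hW2 : W y ^ 2 ≤ H ^ 2 := by
      have := hW0 y; have := hWH y; nlinarith
    have hW2nn : 0 ≤ W y ^ 2 := sq_nonneg _
    -- s ≤ p y / 2 + ι / N
    have hsle : s ≤ p y / 2 + ι / N := by
      have hle : 2 * p y * ι / N ≤ (p y / 2 + ι / N) ^ 2 := by
        have hid : (p y / 2 + ι / N) ^ 2 - 2 * p y * ι / N
            = (p y / 2 - ι / N) ^ 2 := by ring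
        linarith [sq_nonneg (p y / 2 - ι / N)]
      calc s ≤ Real.sqrt ((p y / 2 + ι / N) ^ 2) := Real.sqrt_le_sqrt hle
        _ = p y / 2 + ι / N := Real.sqrt_sq (by positivity)
    have e1 : 2 * ι / (3 * N) = 2 / 3 * (ι / N) := by ring
    rw [e1] at habs
    have hqle : q y ≤ p y + p y / 2 + ι / N + 2 / 3 * (ι / N) := by linarith
    have hmul : q y * W y ^ 2 ≤ (p y + p y / 2 + ι / N + 2 / 3 * (ι / N)) * W y ^ 2 :=
      mul_le_mul_of_nonneg_right hqle hW2nn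
    have hιN : 0 ≤ ι / N := by positivity
    have e2 : 2 * H ^ 2 * ι / N = 2 * (ι / N * H ^ 2) := by ring
    rw [e2]
    nlinarith [mul_le_mul_of_nonneg_left hW2 hιN, mul_nonneg (hp0 y) hW2nn,
      mul_nonneg hιN (sq_nonneg H)]
  -- Combine
  have h3 : (∑ y, q y * W y ^ 2)
      ≤ ∑ y, (2 * p y * W y ^ 2 + 2 * H ^ 2 * ι / N) :=
    Finset.sum_le_sum fun y _ => h2 y
  have h4 : (∑ y, (2 * p y * W y ^ 2 + 2 * H ^ 2 * ι / N))
      = 2 * (∑ y, p y * W y ^ 2) + (Fintype.card S : ℝ) * (2 * H ^ 2 * ι / N) := by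
    rw [Finset.sum_add_distrib, Finset.sum_const, Finset.mul_sum]
    simp [mul_assoc, Finset.card_univ, nsmul_eq_mul]
  calc (∑ y, q y * (W y - ∑ z, q z * W z) ^ 2)
      ≤ ∑ y, q y * W y ^ 2 := h1
    _ ≤ 2 * (∑ y, p y * W y ^ 2) + (Fintype.card S : ℝ) * (2 * H ^ 2 * ι / N) := by
        rw [← h4]; exact h3
    _ = 2 * (∑ y, p y * W y ^ 2) + 2 * H ^ 2 * (Fintype.card S : ℝ) * ι / N := by ring
end

section
/- Under the same setup as the optimism lemma, additionally define the pessimistic value functions: $\underline{V}_{H+1}(x)=0$, $\underline{Q}_h(x,a) = \max\{0,\; r_h(x,a) - a_h(x,a) + \sum_y \widehat{\mathbb{P}}(y\mid x,a)\underline{V}_{h+1}(y)\}$, $\underline{V}_h(x) = \underline{Q}_h(x,\pi_h(x))$ where $\pi_h(x) = \arg\max_a Q_h(x,a)$, and suppose for all $(x,a,h)$, $\big|\sum_y(\widehat{\mathbb{P}} - \mathbb{P})(y\mid x,a) V^*_{h+1}(y)\big| \le a_h(x,a)$ and $\le b_h(x,a)$. Then for all $x, h$: $\underline{V}_h(x)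 \le V^*_h(x) \le V_h(x)$. -/
/-- Sandwich: pessimistic values lower-bound and optimistic values upper-bound
the true optimal value function. -/
theorem stmt5 {S A : Type*} [Fintype S] [Fintype A] [Nonempty A]
    (H : ℕ) (hH : 1 ≤ H)
    (P Phat : S → A → S → ℝ)
    (hP : ∀ x a, (∀ y, 0 ≤ P x a y) ∧ ∑ y, P x a y = 1)
    (hPhat : ∀ x a, (∀ y, 0 ≤ Phat x a y) ∧ ∑ y, Phat x a y = 1)
    (r : ℕ → S → A → ℝ) (hr : ∀ h x a, r h x a ∈ Set.Icc (0:ℝ) 1)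
    (ab bb : ℕ → S → A → ℝ)
    (hab : ∀ h x a, 0 ≤ ab h x a) (hbb : ∀ h x a, 0 ≤ bb h x a)
    (Vstar : ℕ → S → ℝ)
    (hVstar_top : ∀ x, Vstar (H+1) x = 0)
    (hVstar : ∀ h, 1 ≤ h → h ≤ H → ∀ x,
      Vstar h x = Finset.univ.sup' Finset.univ_nonempty
        (fun a => r h x a + ∑ y, P x a y * Vstar (h+1) y))
    (Q : ℕ → S → A → ℝ) (V : ℕ → S → ℝ) (π : ℕ → S → A)
    (hV_top : ∀ x, V (H+1) x = 0)
    (hQ : ∀ h, 1 ≤ h → h ≤ H → ∀ x a,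
      Q h x a = min (H : ℝ) (r h x a + bb h x a + ∑ y, Phat x a y * V (h+1) y))
    (hV : ∀ h, 1 ≤ h → h ≤ H → ∀ x,
      V h x = Finset.univ.sup' Finset.univ_nonempty (fun a => Q h x a))
    (hπ : ∀ h, 1 ≤ h → h ≤ H → ∀ x, Q h x (π h x) = V h x)
    (Qlow : ℕ → S → A → ℝ) (Vlow : ℕ → S → ℝ)
    (hVlow_top : ∀ x, Vlow (H+1) x = 0)
    (hQlow : ∀ h, 1 ≤ h → h ≤ H → ∀ x a,
      Qlow h x a = max 0 (r h x a - ab h x a + ∑ y, Phat x a y * Vlow (h+1) y))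
    (hVlow : ∀ h, 1 ≤ h → h ≤ H → ∀ x, Vlow h x = Qlow h x (π h x))
    (hconc_a : ∀ h, 1 ≤ h → h ≤ H → ∀ x a,
      |∑ y, (Phat x a y - P x a y) * Vstar (h+1) y| ≤ ab h x a)
    (hconc_b : ∀ h, 1 ≤ h → h ≤ H → ∀ x a,
      |∑ y, (Phat x a y - P x a y) * Vstar (h+1) y| ≤ bb h x a) :
    ∀ h, 1 ≤ h → h ≤ H + 1 → ∀ x, Vlow h x ≤ Vstar h x ∧ Vstar h x ≤ V h x := by

  -- strong statement with extra bounds on Vstar, proved by induction on k = H+1-h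
  have key : ∀ k h, 1 ≤ h → h + k = H + 1 → ∀ x,
      (0 ≤ Vstar h x ∧ Vstar h x ≤ (H : ℝ) + 1 - h) ∧
      Vlow h x ≤ Vstar h x ∧ Vstar h x ≤ V h x := by
    intro k
    induction k with
    | zero =>
      intro h h1 hk x
      simp only [Nat.add_zero] at hk
      subst hk
      simp [hVstar_top, hV_top, hVlow_top]
    | succ k ih =>
      intro h h1 hk x
      have hhH : h ≤ H := by omega
      have ih' := ih (h + 1) (by omega) (by omega)
      have hVs0 : ∀ y, 0 ≤ Vstar (h+1) y := fun y => ((ih' y).1).1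
      have hVsB : ∀ y, Vstar (h+1) y ≤ (H : ℝ) - h := by
        intro y
        have := ((ih' y).1).2
        push_cast at this ⊢
        linarith
      have hLow : ∀ y, Vlow (h+1) y ≤ Vstar (h+1) y := fun y => ((ih' y).2).1
      have hUp : ∀ y, Vstar (h+1) y ≤ V (h+1) y := fun y => ((ih' y).2).2
      have hP0 := fun a => (hP x a).1
      have hP1 := fun a => (hP x a).2
      have hPh0 := fun a => (hPhat x a).1
      have hPh1 := fun a => (hPhat x a).2
      have hr0 := fun a => (hr h x a).1
      have hr1 := fun a => (hr h x a).2
      -- sum bounds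
      have hsum0 : ∀ a, 0 ≤ ∑ y, P x a y * Vstar (h+1) y := by
        intro a
        exact Finset.sum_nonneg fun y _ => mul_nonneg (hP0 a y) (hVs0 y)
      have hsumB : ∀ a, ∑ y, P x a y * Vstar (h+1) y ≤ (H : ℝ) - h := by
        intro a
        calc ∑ y, P x a y * Vstar (h+1) y
            ≤ ∑ y, P x a y * ((H : ℝ) - h) :=
              Finset.sum_le_sum fun y _ => mul_le_mul_of_nonneg_left (hVsB y) (hP0 a y)
          _ = (H : ℝ) - h := by rw [← Finset.sum_mul, hP1 a, one_mul]
      have hdiff : ∀ a, ∑ y, Phat x a y * Vstar (h+1) y - ∑ y, P x a y * Vstar (h+1) y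
          = ∑ y, (Phat x a y - P x a y) * Vstar (h+1) y := by
        intro a
        rw [← Finset.sum_sub_distrib]
        exact Finset.sum_congr rfl fun y _ => by ring
      have hVseq := hVstar h h1 hhH x
      -- Vstar nonneg
      have hVsnn : 0 ≤ Vstar h x := by
        rw [hVseq]
        obtain ⟨a⟩ := ‹Nonempty A›
        exact le_trans (add_nonneg (hr0 a) (hsum0 a))
          (Finset.le_sup' (fun a => r h x a + ∑ y, P x a y * Vstar (h+1) y)
            (Finset.mem_univ a))
      have hVsup : Vstar h x ≤ (H : ℝ) + 1 - h := by
        rw [hVseq]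
        apply Finset.sup'_le
        intro a _
        have := hsumB a
        have := hr1 a
        linarith
      have hVsH : Vstar h x ≤ (H : ℝ) := by
        have : (1 : ℝ) ≤ h := by exact_mod_cast h1
        linarith
      refine ⟨⟨hVsnn, hVsup⟩, ?_, ?_⟩
      · -- Vlow ≤ Vstar
        rw [hVlow h h1 hhH x, hQlow h h1 hhH x]
        apply max_le hVsnn
        set a := π h x
        have h1' : ∑ y, Phat x a y * Vlow (h+1) y ≤ ∑ y, Phat x a y * Vstar (h+1) y :=
          Finset.sum_le_sum fun y _ => mul_le_mul_of_nonneg_left (hLow y) (hPh0 a y)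
        have h2' : ∑ y, Phat x a y * Vstar (h+1) y - ∑ y, P x a y * Vstar (h+1) y ≤ ab h x a := by
          rw [hdiff a]
          exact le_trans (le_abs_self _) (hconc_a h h1 hhH x a)
        have h3' : r h x a + ∑ y, P x a y * Vstar (h+1) y ≤ Vstar h x := by
          rw [hVseq]
          exact Finset.le_sup' (fun a => r h x a + ∑ y, P x a y * Vstar (h+1) y)
            (Finset.mem_univ a)
        linarith
      · -- Vstar ≤ V
        rw [hVseq, hV h h1 hhH x]
        apply Finset.sup'_le
        intro a _
        have h3' : r h x a + ∑ y, P x a y * Vstar (h+1) y ≤ Q h x a := by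
          rw [hQ h h1 hhH x a]
          apply le_min
          · have := hsumB a
            have := hr1 a
            have h1r : (1 : ℝ) ≤ h := by exact_mod_cast h1
            linarith
          · have h1' : ∑ y, Phat x a y * Vstar (h+1) y ≤ ∑ y, Phat x a y * V (h+1) y :=
              Finset.sum_le_sum fun y _ => mul_le_mul_of_nonneg_left (hUp y) (hPh0 a y)
            have h2' : ∑ y, P x a y * Vstar (h+1) y - ∑ y, Phat x a y * Vstar (h+1) y ≤ bb h x a := by
              have := le_trans (neg_abs_le _) ((neg_le_neg (hconc_b h h1 hhH x a)))
              rw [← hdiff a] at *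
              have habs := hconc_b h h1 hhH x a
              rw [← hdiff a] at habs
              have := neg_le_of_abs_le habs
              linarith
            linarith
        exact le_trans h3' (Finset.le_sup' _ (Finset.mem_univ a))
  intro h h1 h2 x
  exact (key (H + 1 - h) h h1 (by omega) x).2
end

section
/- Let $e_0 = 0$ and $e_1,\dots,e_n$ be the standard basis of $\mathbb{R}^n$. Suppose $A \in \mathbb{R}^{d\times n}$ is a matrix satisfying $(1-\epsilon)\|e_i - e_j\|_2 \le \|Ae_i - Ae_j\|_2 \le (1+\epsilon)\|e_i - e_j\|_2$ for all $i,j \in \{0,1,\dots,n\}$ (where $Ae_0 = 0$). Then for all $i \in \{1,\dots,n\}$, $\|A^\top A e_i - e_i\|_\infty \le 4\epsilon$. -/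
/-- Near-isometry on `{0, e₁, …, eₙ}` implies `‖AᵀA eᵢ - eᵢ‖_∞ ≤ 4ε`. -/
theorem stmt6 (n d : ℕ) (ε : ℝ) (hε0 : 0 ≤ ε) (hε1 : ε ≤ 1)
    (A : Matrix (Fin d) (Fin n) ℝ)
    (e : Fin n → Fin n → ℝ)
    (he : ∀ i, e i = fun k => if k = i then (1:ℝ) else 0)
    (hpair : ∀ i j : Fin n,
      (1 - ε) * Real.sqrt (∑ k, (e i k - e j k) ^ 2) ≤
        Real.sqrt (∑ k, (A.mulVec (e i) k - A.mulVec (e j) k) ^ 2) ∧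
      Real.sqrt (∑ k, (A.mulVec (e i) k - A.mulVec (e j) k) ^ 2) ≤
        (1 + ε) * Real.sqrt (∑ k, (e i k - e j k) ^ 2))
    (hzero : ∀ i : Fin n,
      (1 - ε) * Real.sqrt (∑ k, (e i k) ^ 2) ≤
        Real.sqrt (∑ k, (A.mulVec (e i) k) ^ 2) ∧
      Real.sqrt (∑ k, (A.mulVec (e i) k) ^ 2) ≤
        (1 + ε) * Real.sqrt (∑ k, (e i k) ^ 2)) :
    ∀ i j : Fin n, |(A.transpose * A).mulVec (e i) j - e i j| ≤ 4 * ε := by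
  intro i j
  have hmv : ∀ (i : Fin n) (l : Fin d), A.mulVec (e i) l = A l i := by
    intro i l
    simp [Matrix.mulVec, dotProduct, he]
  have h1e : (0:ℝ) ≤ 1 - ε := by linarith
  have hS : ∀ i : Fin n, (1 - ε)^2 ≤ (∑ l, (A l i)^2) ∧ (∑ l, (A l i)^2) ≤ (1 + ε)^2 := by
    intro i
    have h1 : (∑ k, (e i k) ^ 2) = 1 := by simp [he, sq, ite_mul, Finset.sum_ite_eq']
    have hz := hzero i
    rw [h1, Real.sqrt_one] at hz
    simp only [hmv] at hz
    have hnn : (0:ℝ) ≤ ∑ l, (A l i)^2 := Finset.sum_nonneg fun _ _ => sq_nonneg _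
    have hsq := Real.sq_sqrt hnn
    constructor <;> nlinarith [hz.1, hz.2, Real.sqrt_nonneg (∑ l, (A l i)^2)]
  have hT : (A.transpose * A).mulVec (e i) j = ∑ l, A l j * A l i := by
    simp [Matrix.mulVec, dotProduct, Matrix.mul_apply, he, Finset.sum_ite_eq',
      Matrix.transpose_apply]
  rcases eq_or_ne i j with rfl | hij
  · rw [hT]
    have hself : (∑ l, A l i * A l i) = ∑ l, (A l i)^2 := by
      apply Finset.sum_congr rfl; intro l _; ring
    rw [hself]
    have := hS i
    have hd : e i i = 1 := by simp [he]
    rw [hd, abs_le]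
    constructor <;> nlinarith [this.1, this.2]
  · have h2 : (∑ k, (e i k - e j k) ^ 2) = 2 := by
      have hterm : ∀ k, (e i k - e j k)^2 = (e i k)^2 - 2 * (e i k * e j k) + (e j k)^2 := by
        intro k; ring
      simp only [hterm, Finset.sum_add_distrib, Finset.sum_sub_distrib]
      simp [he, sq, ite_mul, mul_ite, Finset.sum_ite_eq', hij, Ne.symm hij]
      norm_num
    have hp := hpair i j
    rw [h2] at hp
    simp only [hmv] at hp
    have hD : (2:ℝ)*(1-ε)^2 ≤ (∑ l, (A l i - A l j)^2) ∧ (∑ l, (A l i - A l j)^2) ≤ 2*(1+ε)^2 := by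
      have hnn : (0:ℝ) ≤ ∑ l, (A l i - A l j)^2 := Finset.sum_nonneg fun _ _ => sq_nonneg _
      have hsq := Real.sq_sqrt hnn
      have hs2 : Real.sqrt 2 ^ 2 = 2 := Real.sq_sqrt (by norm_num)
      have hs2n : (0:ℝ) ≤ Real.sqrt 2 := Real.sqrt_nonneg 2
      constructor <;> nlinarith [hp.1, hp.2, Real.sqrt_nonneg (∑ l, (A l i - A l j)^2),
        mul_nonneg h1e hs2n]
    have hexp : (∑ l, (A l i - A l j)^2)
        = (∑ l, (A l i)^2) + (∑ l, (A l j)^2) - 2 * (∑ l, A l j * A l i) := by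
      rw [Finset.mul_sum, ← Finset.sum_add_distrib, ← Finset.sum_sub_distrib]
      apply Finset.sum_congr rfl; intro l _; ring
    have hd : e i j = 0 := by simp [he, Ne.symm hij]
    rw [hT, hd, sub_zero, abs_le]
    have hi := hS i; have hj := hS j
    constructor <;> nlinarith [hi.1, hi.2, hj.1, hj.2, hD.1, hD.2]
end

section
/- For $d \ge \frac{200}{\epsilon^2}\log(n+1)$ with $0 < \epsilon \le 1$, there exists a matrix $A \in \mathbb{R}^{d\times n}$ such that $\|A^\top A e_i - e_i\|_\infty \le \epsilon$ for all standard basis vectors $e_1,\dots,e_n$ of $\mathbb{R}^n$. -/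
set_option maxHeartbeats 1000000
open Finset Real

/-- sign of a Boolean, as a real number -/
private def sgn (b : Bool) : ℝ := if b then 1 else -1

private lemma sgn_mul_sgn (a b : Bool) : sgn a * sgn b = - sgn (xor a b) := by
  cases a <;> cases b <;> simp [sgn]

private lemma sgn_not (b : Bool) : sgn (!b) = - sgn b := by cases b <;> simp [sgn]

private lemma sgn_mul_self (b : Bool) : sgn b * sgn b = 1 := by cases b <;> simp [sgn]

/-- moment generating function of a sum of `d` independent signs -/
private lemma mgf_eq (d : ℕ) (μ : ℝ) :
    ∑ t : Fin d → Bool, Real.exp (μ * ∑ k, sgn (t k))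
      = (Real.exp μ + Real.exp (-μ)) ^ d := by
  have h : ∀ t : Fin d → Bool, Real.exp (μ * ∑ k, sgn (t k))
      = ∏ k, Real.exp (μ * sgn (t k)) := by
    intro t
    rw [← Real.exp_sum, Finset.mul_sum]
  simp_rw [h]
  have hps := Finset.prod_univ_sum (fun _ : Fin d => (Finset.univ : Finset Bool))
    (fun _ b => Real.exp (μ * sgn b))
  rw [← Fintype.piFinset_univ, ← hps]
  have : ∀ k : Fin d, ∑ b : Bool, Real.exp (μ * sgn b)
      = Real.exp μ + Real.exp (-μ) := by
    intro k
    simp [sgn]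
  calc ∏ _k : Fin d, ∑ b : Bool, Real.exp (μ * sgn b)
      = ∏ _k : Fin d, (Real.exp μ + Real.exp (-μ)) := by
        exact Finset.prod_congr rfl fun k _ => this k
    _ = (Real.exp μ + Real.exp (-μ)) ^ d := by
        rw [Finset.prod_const, Finset.card_univ, Fintype.card_fin]

/-- Chernoff-type counting bound -/
private lemma chernoff (d : ℕ) (a l : ℝ) (hl : 0 ≤ l) (s : Finset (Fin d → Bool))
    (hs : ∀ t ∈ s, a ≤ ∑ k, sgn (t k)) :
    (s.card : ℝ) * Real.exp (l * a) ≤ (Real.exp l + Real.exp (-l)) ^ d := by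
  rw [← mgf_eq]
  calc (s.card : ℝ) * Real.exp (l * a) = ∑ _t ∈ s, Real.exp (l * a) := by
        rw [Finset.sum_const, nsmul_eq_mul]
    _ ≤ ∑ t ∈ s, Real.exp (l * ∑ k, sgn (t k)) := by
        refine Finset.sum_le_sum fun t ht => ?_
        exact Real.exp_le_exp.2 (mul_le_mul_of_nonneg_left (hs t ht) hl)
    _ ≤ ∑ t : Fin d → Bool, Real.exp (l * ∑ k, sgn (t k)) := by
        refine Finset.sum_le_sum_of_subset_of_nonneg (Finset.subset_univ s) ?_
        intro t _ _
        exact (Real.exp_pos _).le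

/-- counting functions by a predicate on one coordinate -/
private lemma card_eval (n d : ℕ) (j : Fin n) (Q : (Fin d → Bool) → Prop)
    [DecidablePred Q] :
    (Finset.univ.filter fun ω : Fin n → Fin d → Bool => Q (ω j)).card
      = (Finset.univ.filter Q).card * 2 ^ (d * (n - 1)) := by
  classical
  rw [← Fintype.card_subtype, ← Fintype.card_subtype]
  have e : {ω : Fin n → Fin d → Bool // Q (ω j)}
      ≃ {t : Fin d → Bool // Q t} × ({k : Fin n // k ≠ j} → Fin d → Bool) := by
    refine Equiv.trans ((Equiv.funSplitAt j (Fin d → Bool)).subtypeEquiv ?_)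
      Equiv.prodSubtypeFstEquivSubtypeProd
    intro ω
    rfl
  rw [Fintype.card_congr e, Fintype.card_prod]
  congr 1
  have hc : Fintype.card {k : Fin n // k ≠ j} = n - 1 := by
    simp [Fintype.card_subtype_compl, Fintype.card_subtype_eq]
  rw [Fintype.card_fun, Fintype.card_fun, hc]
  simp only [Fintype.card_bool, Fintype.card_fin]
  rw [← pow_mul]

/-- xor-ing two distinct coordinates is measure-preserving -/
private lemma card_xor (n d : ℕ) (i j : Fin n) (hij : i ≠ j)
    (Q : (Fin d → Bool) → Prop) [DecidablePred Q] :
    (Finset.univ.filter fun ω : Fin n → Fin d → Bool =>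
        Q (fun k => xor (ω i k) (ω j k))).card
      = (Finset.univ.filter fun ω : Fin n → Fin d → Bool => Q (ω j)).card := by
  classical
  have hinv : ∀ ω : Fin n → Fin d → Bool,
      Function.update (Function.update ω j (fun k => xor (ω i k) (ω j k))) j
        (fun k => xor ((Function.update ω j (fun k => xor (ω i k) (ω j k))) i k)
          ((Function.update ω j (fun k => xor (ω i k) (ω j k))) j k)) = ω := by
    intro ω
    funext m k
    rcases eq_or_ne m j with rfl | hm
    · rw [Function.update_self, Function.update_of_ne hij, Function.update_self]
      show xor (ω i k) (xor (ω i k) (ω m k)) = ω m k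
      cases ω i k <;> cases ω m k <;> rfl
    · rw [Function.update_of_ne hm, Function.update_of_ne hm]
  have hxj : ∀ ω : Fin n → Fin d → Bool,
      (fun k => xor ((Function.update ω j (fun k => xor (ω i k) (ω j k))) i k)
        ((Function.update ω j (fun k => xor (ω i k) (ω j k))) j k)) = ω j := by
    intro ω
    funext k
    rw [Function.update_of_ne hij, Function.update_self]
    show xor (ω i k) (xor (ω i k) (ω j k)) = ω j k
    cases ω i k <;> cases ω j k <;> rfl
  refine Finset.card_bij'
    (fun ω _ => Function.update ω j (fun k => xor (ω i k) (ω j k)))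
    (fun ω _ => Function.update ω j (fun k => xor (ω i k) (ω j k))) ?_ ?_ ?_ ?_
  · intro ω hω
    rw [Finset.mem_filter] at hω ⊢
    refine ⟨Finset.mem_univ _, ?_⟩
    show Q ((Function.update ω j (fun k => xor (ω i k) (ω j k))) j)
    rw [Function.update_self]
    exact hω.2
  · intro ω hω
    rw [Finset.mem_filter] at hω ⊢
    refine ⟨Finset.mem_univ _, ?_⟩
    show Q (fun k => xor ((Function.update ω j (fun k => xor (ω i k) (ω j k))) i k)
      ((Function.update ω j (fun k => xor (ω i k) (ω j k))) j k))
    rw [hxj ω]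
    exact hω.2
  · intro ω _
    exact hinv ω
  · intro ω _
    exact hinv ω

/-- Johnson–Lindenstrauss style embedding: for `d ≥ (200/ε²) log(n+1)` there
exists `A ∈ ℝ^{d×n}` with `‖AᵀA eᵢ - eᵢ‖_∞ ≤ ε` for all basis vectors `eᵢ`. -/
theorem stmt7 (n d : ℕ) (ε : ℝ) (hε0 : 0 < ε) (hε1 : ε ≤ 1)
    (hd : (d : ℝ) ≥ 200 / ε ^ 2 * Real.log (n + 1)) :
    ∃ A : Matrix (Fin d) (Fin n) ℝ, ∀ i j : Fin n,
      |(A.transpose * A).mulVec (fun k => if k = i then (1:ℝ) else 0) j -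
        (if j = i then (1:ℝ) else 0)| ≤ ε := by
  classical
  rcases Nat.eq_zero_or_pos n with hn | hn
  · subst hn
    exact ⟨0, fun i => i.elim0⟩
  -- d is positive
  have hn1 : (1 : ℝ) ≤ n := by exact_mod_cast hn
  have hlog : 0 < Real.log (n + 1) := Real.log_pos (by linarith)
  have hdpos : 0 < d := by
    rcases Nat.eq_zero_or_pos d with h0 | h
    · exfalso
      rw [h0] at hd
      have hpos : (0 : ℝ) < 200 / ε ^ 2 * Real.log (n + 1) :=
        mul_pos (div_pos (by norm_num) (pow_pos hε0 2)) hlog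
      rw [Nat.cast_zero] at hd
      linarith
    · exact h
  -- the key counting bound
  set B : Finset (Fin d → Bool) :=
    Finset.univ.filter (fun t => ε * d ≤ ∑ k, sgn (t k)) with hB
  have hBbound : (B.card : ℝ) ≤ 2 ^ d * Real.exp (-(ε ^ 2 * d) / 2) := by
    have hch := chernoff d (ε * d) ε hε0.le B
      (fun t ht => (Finset.mem_filter.1 ht).2)
    have hcosh : (Real.exp ε + Real.exp (-ε)) ^ d
        ≤ (2 * Real.exp (ε ^ 2 / 2)) ^ d := by
      apply pow_le_pow_left₀ (by positivity)
      have := Real.cosh_le_exp_half_sq ε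
      rw [Real.cosh_eq] at this
      linarith
    have h2 : (2 * Real.exp (ε ^ 2 / 2)) ^ d
        = 2 ^ d * Real.exp (ε ^ 2 * d / 2) := by
      rw [mul_pow, ← Real.exp_nat_mul]
      ring_nf
    have hexp : 0 < Real.exp (ε * (ε * d)) := Real.exp_pos _
    have key : (B.card : ℝ) * Real.exp (ε * (ε * d))
        ≤ 2 ^ d * Real.exp (ε ^ 2 * d / 2) := by
      calc (B.card : ℝ) * Real.exp (ε * (ε * d))
          ≤ (Real.exp ε + Real.exp (-ε)) ^ d := hch
        _ ≤ (2 * Real.exp (ε ^ 2 / 2)) ^ d := hcosh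
        _ = 2 ^ d * Real.exp (ε ^ 2 * d / 2) := h2
    have : (B.card : ℝ) ≤ 2 ^ d * Real.exp (ε ^ 2 * d / 2) / Real.exp (ε * (ε * d)) := by
      rw [le_div_iff₀ hexp]
      exact key
    calc (B.card : ℝ) ≤ 2 ^ d * Real.exp (ε ^ 2 * d / 2) / Real.exp (ε * (ε * d)) := this
      _ = 2 ^ d * Real.exp (-(ε ^ 2 * d) / 2) := by
          rw [mul_div_assoc, ← Real.exp_sub]
          ring_nf
  -- key numeric inequality: 2 n² B < 2^d
  have hκ : ((Finset.univ.offDiag : Finset (Fin n × Fin n)).card : ℝ) * (2 * B.card)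
      < 2 ^ d := by
    have hoff : ((Finset.univ.offDiag : Finset (Fin n × Fin n)).card : ℝ) ≤ (n : ℝ) ^ 2 := by
      rw [Finset.offDiag_card, Finset.card_univ, Fintype.card_fin]
      calc ((n * n - n : ℕ) : ℝ) ≤ ((n * n : ℕ) : ℝ) := Nat.cast_le.2 (Nat.sub_le _ _)
        _ = (n : ℝ) ^ 2 := by push_cast; ring
    have hεd : 200 * Real.log (n + 1) ≤ ε ^ 2 * d := by
      have h1 : 200 / ε ^ 2 * Real.log (n + 1) ≤ (d : ℝ) := hd
      have h2 : 0 < ε ^ 2 := pow_pos hε0 2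
      calc 200 * Real.log (n + 1) = ε ^ 2 * (200 / ε ^ 2 * Real.log (n + 1)) := by
            field_simp
        _ ≤ ε ^ 2 * d := by nlinarith
    have hexp_big : (2 : ℝ) * (n : ℝ) ^ 2 < Real.exp (ε ^ 2 * d / 2) := by
      have h100 : Real.exp (100 * Real.log (n + 1)) = ((n : ℝ) + 1) ^ (100 : ℕ) := by
        rw [show (100 : ℝ) * Real.log (n + 1) = ((100 : ℕ) : ℝ) * Real.log (n + 1) by
          norm_num, Real.exp_nat_mul, Real.exp_log (by linarith)]
      have h3 : ((n : ℝ) + 1) ^ (3 : ℕ) ≤ ((n : ℝ) + 1) ^ (100 : ℕ) :=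
        pow_le_pow_right₀ (by linarith) (by norm_num)
      have h4 : (2 : ℝ) * (n : ℝ) ^ 2 < ((n : ℝ) + 1) ^ (3 : ℕ) := by nlinarith [hn1]
      have h5 : Real.exp (100 * Real.log (n + 1)) ≤ Real.exp (ε ^ 2 * d / 2) :=
        Real.exp_le_exp.2 (by linarith)
      calc (2 : ℝ) * (n : ℝ) ^ 2 < ((n : ℝ) + 1) ^ (3 : ℕ) := h4
        _ ≤ ((n : ℝ) + 1) ^ (100 : ℕ) := h3
        _ = Real.exp (100 * Real.log (n + 1)) := h100.symm
        _ ≤ Real.exp (ε ^ 2 * d / 2) := h5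
    have hBn : (0 : ℝ) ≤ (B.card : ℝ) := Nat.cast_nonneg _
    have e1 : Real.exp (-(ε ^ 2 * d) / 2) * Real.exp (ε ^ 2 * d / 2) = 1 := by
      rw [← Real.exp_add]; ring_nf; exact Real.exp_zero
    have hoffn : (0 : ℝ) ≤ ((Finset.univ.offDiag : Finset (Fin n × Fin n)).card : ℝ) :=
      Nat.cast_nonneg _
    calc ((Finset.univ.offDiag : Finset (Fin n × Fin n)).card : ℝ) * (2 * B.card)
        ≤ (n : ℝ) ^ 2 * (2 * (2 ^ d * Real.exp (-(ε ^ 2 * d) / 2))) := by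
          apply mul_le_mul hoff (by linarith) (by positivity) (by positivity)
      _ = 2 * (n : ℝ) ^ 2 * Real.exp (-(ε ^ 2 * d) / 2) * 2 ^ d := by ring
      _ < Real.exp (ε ^ 2 * d / 2) * Real.exp (-(ε ^ 2 * d) / 2) * 2 ^ d := by
          have hp : (0 : ℝ) < Real.exp (-(ε ^ 2 * d) / 2) * 2 ^ d := by positivity
          nlinarith [hp, hexp_big, Real.exp_pos (-(ε ^ 2 * d) / 2)]
      _ = 2 ^ d := by rw [mul_comm (Real.exp _), e1, one_mul]
  -- define the bad set
  set Bad : Finset (Fin n → Fin d → Bool) :=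
    Finset.univ.filter (fun ω => ∃ p ∈ (Finset.univ.offDiag : Finset (Fin n × Fin n)),
      ε * d < |∑ k, sgn (ω p.1 k) * sgn (ω p.2 k)|) with hBad
  -- per-pair count
  have hpair : ∀ p ∈ (Finset.univ.offDiag : Finset (Fin n × Fin n)),
      (Finset.univ.filter (fun ω : Fin n → Fin d → Bool =>
        ε * d < |∑ k, sgn (ω p.1 k) * sgn (ω p.2 k)|)).card
      ≤ 2 * B.card * 2 ^ (d * (n - 1)) := by
    rintro ⟨i, j⟩ hp
    rw [Finset.mem_offDiag] at hp
    obtain ⟨-, -, hij⟩ := hp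
    -- rewrite via xor
    have hrw : ∀ ω : Fin n → Fin d → Bool,
        |∑ k, sgn (ω i k) * sgn (ω j k)|
          = |∑ k, sgn (xor (ω i k) (ω j k))| := by
      intro ω
      simp_rw [sgn_mul_sgn]
      rw [Finset.sum_neg_distrib, abs_neg]
    have step1 : (Finset.univ.filter (fun ω : Fin n → Fin d → Bool =>
        ε * d < |∑ k, sgn (ω i k) * sgn (ω j k)|)).card
        = (Finset.univ.filter (fun ω : Fin n → Fin d → Bool =>
          ε * d < |∑ k, sgn (ω j k)|)).card := by
      have : (Finset.univ.filter (fun ω : Fin n → Fin d → Bool =>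
          ε * d < |∑ k, sgn (ω i k) * sgn (ω j k)|))
          = (Finset.univ.filter (fun ω : Fin n → Fin d → Bool =>
            (fun t : Fin d → Bool => ε * d < |∑ k, sgn (t k)|)
              (fun k => xor (ω i k) (ω j k)))) := by
        apply Finset.filter_congr
        intro ω _
        simp only [hrw ω]
      rw [this, card_xor n d i j hij (fun t => ε * d < |∑ k, sgn (t k)|)]
    have step2 : (Finset.univ.filter (fun ω : Fin n → Fin d → Bool =>
        ε * d < |∑ k, sgn (ω j k)|)).card
        = (Finset.univ.filter (fun t : Fin d → Bool =>
          ε * d < |∑ k, sgn (t k)|)).card * 2 ^ (d * (n - 1)) :=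
      card_eval n d j (fun t => ε * d < |∑ k, sgn (t k)|)
    -- single-coordinate count ≤ 2 * B.card
    have step3 : (Finset.univ.filter (fun t : Fin d → Bool =>
        ε * d < |∑ k, sgn (t k)|)).card ≤ 2 * B.card := by
      have hsub : (Finset.univ.filter (fun t : Fin d → Bool =>
          ε * d < |∑ k, sgn (t k)|))
          ⊆ B ∪ (Finset.univ.filter (fun t : Fin d → Bool =>
            ε * d ≤ -∑ k, sgn (t k))) := by
        intro t ht
        rw [Finset.mem_filter] at ht
        rw [Finset.mem_union, hB, Finset.mem_filter, Finset.mem_filter]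
        rcases lt_abs.1 ht.2 with h | h
        · exact Or.inl ⟨Finset.mem_univ _, h.le⟩
        · exact Or.inr ⟨Finset.mem_univ _, by linarith⟩
      have hneg : (Finset.univ.filter (fun t : Fin d → Bool =>
          ε * d ≤ -∑ k, sgn (t k))).card ≤ B.card := by
        apply Finset.card_le_card_of_injOn (fun t => fun k => !(t k))
        · intro t ht
          rw [Finset.mem_coe, Finset.mem_filter] at ht
          rw [Finset.mem_coe, hB, Finset.mem_filter]
          refine ⟨Finset.mem_univ _, ?_⟩
          have : ∑ k, sgn (!(t k)) = -∑ k, sgn (t k) := by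
            simp_rw [sgn_not]
            rw [Finset.sum_neg_distrib]
          rw [this]
          exact ht.2
        · intro t1 _ t2 _ h
          funext k
          have := congrFun h k
          simpa using this
      calc (Finset.univ.filter (fun t : Fin d → Bool =>
            ε * d < |∑ k, sgn (t k)|)).card
          ≤ (B ∪ (Finset.univ.filter (fun t : Fin d → Bool =>
            ε * d ≤ -∑ k, sgn (t k)))).card := Finset.card_le_card hsub
        _ ≤ B.card + (Finset.univ.filter (fun t : Fin d → Bool =>
            ε * d ≤ -∑ k, sgn (t k))).card := Finset.card_union_le _ _
        _ ≤ B.card + B.card := Nat.add_le_add_left hneg _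
        _ = 2 * B.card := (two_mul _).symm
    rw [step1, step2]
    exact Nat.mul_le_mul_right _ step3
  -- Bad.card < total
  have hBadlt : Bad.card < Fintype.card (Fin n → Fin d → Bool) := by
    have hsub : Bad ⊆ (Finset.univ.offDiag : Finset (Fin n × Fin n)).biUnion
        (fun p => Finset.univ.filter (fun ω : Fin n → Fin d → Bool =>
          ε * d < |∑ k, sgn (ω p.1 k) * sgn (ω p.2 k)|)) := by
      intro ω hω
      simp only [hBad, Finset.mem_filter] at hω
      obtain ⟨-, p, hp, hlt⟩ := hω
      rw [Finset.mem_biUnion]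
      exact ⟨p, hp, Finset.mem_filter.2 ⟨Finset.mem_univ _, hlt⟩⟩
    have h1 : Bad.card ≤ (Finset.univ.offDiag : Finset (Fin n × Fin n)).card
        * (2 * B.card * 2 ^ (d * (n - 1))) := by
      calc Bad.card ≤ _ := Finset.card_le_card hsub
        _ ≤ _ := Finset.card_biUnion_le
        _ ≤ _ := Finset.sum_le_card_nsmul _ _ _ hpair
        _ = _ := by rw [smul_eq_mul]
    have hcast : ((Finset.univ.offDiag : Finset (Fin n × Fin n)).card
        * (2 * B.card) : ℕ) < 2 ^ d := by
      have h2 : (((Finset.univ.offDiag : Finset (Fin n × Fin n)).card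
          * (2 * B.card) : ℕ) : ℝ) < ((2 ^ d : ℕ) : ℝ) := by
        push_cast
        linarith [hκ]
      exact_mod_cast h2
    have htot : Fintype.card (Fin n → Fin d → Bool) = 2 ^ d * 2 ^ (d * (n - 1)) := by
      rw [Fintype.card_fun, Fintype.card_fun]
      simp only [Fintype.card_bool, Fintype.card_fin]
      rw [← pow_mul, ← pow_add]
      congr 1
      conv_lhs => rw [← Nat.succ_pred_eq_of_pos hn, Nat.mul_succ]
      exact Nat.add_comm _ _
    calc Bad.card ≤ (Finset.univ.offDiag : Finset (Fin n × Fin n)).card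
          * (2 * B.card * 2 ^ (d * (n - 1))) := h1
      _ = ((Finset.univ.offDiag : Finset (Fin n × Fin n)).card
          * (2 * B.card)) * 2 ^ (d * (n - 1)) := by ring
      _ < 2 ^ d * 2 ^ (d * (n - 1)) :=
          mul_lt_mul_of_pos_right hcast (Nat.pow_pos (by norm_num))
      _ = Fintype.card (Fin n → Fin d → Bool) := htot.symm
  -- extract a good ω
  obtain ⟨ω, hω⟩ : ∃ ω : Fin n → Fin d → Bool, ω ∉ Bad := by
    by_contra h
    push_neg at h
    have : (Finset.univ : Finset (Fin n → Fin d → Bool)) ⊆ Bad :=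
      fun ω _ => h ω
    have := Finset.card_le_card this
    rw [Finset.card_univ] at this
    omega
  have hgood : ∀ i j : Fin n, i ≠ j →
      |∑ k, sgn (ω i k) * sgn (ω j k)| ≤ ε * d := by
    intro i j hij
    by_contra h
    push_neg at h
    apply hω
    simp only [hBad, Finset.mem_filter]
    exact ⟨Finset.mem_univ _, ⟨(i, j), Finset.mem_offDiag.2
      ⟨Finset.mem_univ _, Finset.mem_univ _, hij⟩, h⟩⟩
  -- build the matrix
  refine ⟨Matrix.of (fun k l => sgn (ω l k) / Real.sqrt d), ?_⟩
  intro i j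
  have hdr : (0 : ℝ) < d := by exact_mod_cast hdpos
  have hsqrt : Real.sqrt d * Real.sqrt d = d :=
    Real.mul_self_sqrt hdr.le
  have hentry : ((Matrix.of (fun k l => sgn (ω l k) / Real.sqrt d)
        : Matrix (Fin d) (Fin n) ℝ).transpose
      * Matrix.of (fun k l => sgn (ω l k) / Real.sqrt d)).mulVec
      (fun k => if k = i then (1:ℝ) else 0) j
      = (∑ k, sgn (ω j k) * sgn (ω i k)) / d := by
    simp only [Matrix.mulVec, dotProduct, mul_ite, mul_one, mul_zero,
      Finset.sum_ite_eq', Finset.mem_univ, if_true, Matrix.mul_apply,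
      Matrix.transpose_apply, Matrix.of_apply]
    have hk : ∀ k : Fin d, sgn (ω j k) / Real.sqrt d * (sgn (ω i k) / Real.sqrt d)
        = sgn (ω j k) * sgn (ω i k) / d := by
      intro k
      rw [div_mul_div_comm, hsqrt]
    simp_rw [hk]
    rw [Finset.sum_div]
  rw [hentry]
  by_cases hji : j = i
  · subst hji
    simp only [if_pos rfl]
    have hsum : ∑ k, sgn (ω j k) * sgn (ω j k) = (d : ℝ) := by
      simp_rw [sgn_mul_self]
      simp
    rw [hsum, div_self hdr.ne']
    simpa using hε0.le
  · simp only [if_neg hji, sub_zero]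
    rw [abs_div, abs_of_pos hdr, div_le_iff₀ hdr]
    calc |∑ k, sgn (ω j k) * sgn (ω i k)| ≤ ε * d := hgood j i hji
      _ = ε * d := rfl
end

section
/- Let $(x_k)_{k=1}^K$ be a sequence of nonnegative reals with $x_k \le H$ for all $k$, and suppose $N_k \ge \frac{1}{2}\sum_{j<k} x_j - L$ for all $k$ (with $N_k > 0$ whenever the indicator condition holds). Then $\sum_{k=1}^K \frac{x_k}{\sqrt{N_k}} \cdot \mathbb{1}\{\sum_{j<k} x_j \ge 2L + 2H\} \le c \sqrt{\sum_{k=1}^K x_k}$ for an absolute constant $c > 0$ (e.g. $c = 4$). -/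
lemma stmt8_aux (H L xk Nk Sk : ℝ) (hH : 1 ≤ H) (hL : 0 ≤ L)
    (hx0 : 0 ≤ xk) (hxH : xk ≤ H) (hNk : Nk ≥ Sk / 2 - L) (hNpos : 0 < Nk)
    (h : Sk ≥ 2 * L + 2 * H) :
    xk / Real.sqrt Nk ≤
      4 * Real.sqrt 2 * (Real.sqrt ((Sk + xk) / 2 - L) - Real.sqrt (Sk / 2 - L)) := by
  have hs2 : Real.sqrt 2 ^ 2 = 2 := Real.sq_sqrt (by norm_num)
  have hs1 : 1 ≤ Real.sqrt 2 := by nlinarith [Real.sqrt_nonneg 2]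
  have hakpos : (0 : ℝ) < Sk / 2 - L := by linarith
  have hak1pos : (0 : ℝ) < (Sk + xk) / 2 - L := by linarith
  set a := Real.sqrt Nk with ha
  set p := Real.sqrt ((Sk + xk) / 2 - L) with hp
  set q := Real.sqrt (Sk / 2 - L) with hq
  have ha2 : a ^ 2 = Nk := Real.sq_sqrt hNpos.le
  have hp2 : p ^ 2 = (Sk + xk) / 2 - L := Real.sq_sqrt hak1pos.le
  have hq2 : q ^ 2 = Sk / 2 - L := Real.sq_sqrt hakpos.le
  have hapos : 0 < a := Real.sqrt_pos.mpr hNpos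
  have hqpos : 0 < q := Real.sqrt_pos.mpr hakpos
  have hppos : 0 < p := Real.sqrt_pos.mpr hak1pos
  have hpq : q ≤ p := Real.sqrt_le_sqrt (by linarith)
  have haq : q ≤ a := by nlinarith
  have hpsq : p ≤ Real.sqrt 2 * q := by
    rw [hp, hq, ← Real.sqrt_mul (by norm_num : (0:ℝ) ≤ 2)]
    apply Real.sqrt_le_sqrt
    linarith
  clear_value a p q
  have h4 : p + q ≤ 2 * Real.sqrt 2 * a := by
    nlinarith [mul_nonneg (sub_nonneg.mpr haq) (by linarith : (0:ℝ) ≤ Real.sqrt 2),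
      mul_nonneg (sub_nonneg.mpr hs1) hapos.le]
  rw [div_le_iff₀ hapos]
  have hx2 : xk = 2 * (p ^ 2 - q ^ 2) := by rw [hp2, hq2]; ring
  nlinarith [mul_nonneg (sub_nonneg.mpr hpq) (sub_nonneg.mpr h4)]

/-- The square-root "integration trick": restricted to sufficiently-visited
rounds, `∑ x_k / √N_k ≤ 4 √(∑ x_k)`. -/
theorem stmt8 (K : ℕ) (H L : ℝ) (hH : 1 ≤ H) (hL : 0 ≤ L)
    (x : ℕ → ℝ) (hx : ∀ k, 0 ≤ x k ∧ x k ≤ H)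
    (N : ℕ → ℝ)
    (hN : ∀ k, N k ≥ (1 / 2) * (∑ j ∈ Finset.range k, x j) - L)
    (hNpos : ∀ k, (∑ j ∈ Finset.range k, x j) ≥ 2 * L + 2 * H → 0 < N k) :
    (∑ k ∈ Finset.range K,
        if (∑ j ∈ Finset.range k, x j) ≥ 2 * L + 2 * H
        then x k / Real.sqrt (N k) else 0)
      ≤ 4 * Real.sqrt (∑ k ∈ Finset.range K, x k) := by
  set S : ℕ → ℝ := fun k => ∑ j ∈ Finset.range k, x j with hS
  have hSmono : ∀ k, S k ≤ S (k + 1) := by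
    intro k
    simp only [hS, Finset.sum_range_succ, le_add_iff_nonneg_right]
    exact (hx k).1
  have hS0 : ∀ k, 0 ≤ S k := fun k => Finset.sum_nonneg fun j _ => (hx j).1
  set f : ℕ → ℝ := fun k => Real.sqrt (max (S k / 2 - L) 0) with hf
  have hfmono : ∀ k, f k ≤ f (k + 1) := by
    intro k
    exact Real.sqrt_le_sqrt (max_le_max (by linarith [hSmono k]) le_rfl)
  have key : ∀ k, (if S k ≥ 2 * L + 2 * H then x k / Real.sqrt (N k) else 0)
      ≤ 4 * Real.sqrt 2 * (f (k + 1) - f k) := by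
    intro k
    by_cases h : S k ≥ 2 * L + 2 * H
    · simp only [if_pos h]
      have hxk := hx k
      have hSk1 : S (k + 1) = S k + x k := by
        simp [hS, Finset.sum_range_succ]
      have hak : (0 : ℝ) < S k / 2 - L := by linarith
      have hak1 : (0 : ℝ) < S (k + 1) / 2 - L := by
        rw [hSk1]; linarith [hxk.1]
      have hfk : f k = Real.sqrt (S k / 2 - L) := by
        show Real.sqrt (max (S k / 2 - L) 0) = _
        rw [max_eq_left hak.le]
      have hfk1 : f (k + 1) = Real.sqrt ((S k + x k) / 2 - L) := by
        show Real.sqrt (max (S (k + 1) / 2 - L) 0) = _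
        rw [max_eq_left hak1.le, hSk1]
      rw [hfk, hfk1]
      exact stmt8_aux H L (x k) (N k) (S k) hH hL hxk.1 hxk.2 (by linarith [hN k])
        (hNpos k h) h
    · simp only [if_neg h]
      have h1 := hfmono k
      have h2 := Real.sqrt_nonneg 2
      nlinarith
  have hf0 : f 0 = 0 := by
    show Real.sqrt (max (S 0 / 2 - L) 0) = 0
    have h0 : S 0 = 0 := by simp [hS]
    rw [h0, max_eq_right (by linarith), Real.sqrt_zero]
  have htel : (∑ k ∈ Finset.range K,
      if S k ≥ 2 * L + 2 * H then x k / Real.sqrt (N k) else 0)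
      ≤ 4 * Real.sqrt 2 * f K := by
    calc (∑ k ∈ Finset.range K,
          if S k ≥ 2 * L + 2 * H then x k / Real.sqrt (N k) else 0)
        ≤ ∑ k ∈ Finset.range K, 4 * Real.sqrt 2 * (f (k + 1) - f k) :=
          Finset.sum_le_sum fun k _ => key k
      _ = 4 * Real.sqrt 2 * (f K - f 0) := by
          rw [← Finset.mul_sum, Finset.sum_range_sub f]
      _ = 4 * Real.sqrt 2 * f K := by rw [hf0]; ring
  refine htel.trans ?_
  have h1 : f K ≤ Real.sqrt (S K / 2) := by
    apply Real.sqrt_le_sqrt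
    exact max_le (by linarith) (by linarith [hS0 K])
  have h2 : Real.sqrt 2 * Real.sqrt (S K / 2) = Real.sqrt (S K) := by
    rw [← Real.sqrt_mul (by norm_num : (0:ℝ) ≤ 2) (S K / 2),
      show (2:ℝ) * (S K / 2) = S K from by ring]
  calc 4 * Real.sqrt 2 * f K ≤ 4 * Real.sqrt 2 * Real.sqrt (S K / 2) := by
        nlinarith [Real.sqrt_nonneg 2]
    _ = 4 * Real.sqrt (S K) := by rw [mul_assoc, h2]
end

section
/- Let $(x_k)_{k=1}^K$ be a sequence of reals with $0 \le x_k \le H$, and suppose $N_k \ge \frac{1}{2}\sum_{j<k} x_j - L$ for all $k$, where $L, H \ge 1$. Then $\sum_{k=1}^K \frac{x_k}{N_k} \cdot \mathbb{1}\{\sum_{j<k}x_j \ge 2L + 2H\} \le c \log\big(2 + \sum_{k=1}^K x_k\big)$ for an absolute constant $c > 0$. -/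
lemma half_le_log_aux (u : ℝ) (h0 : 0 ≤ u) (h1 : u ≤ 1) : u / 2 ≤ Real.log (1 + u) := by
  have h1u : (0:ℝ) < 1 + u := by linarith
  have hlog : Real.log (1 / (1 + u)) ≤ 1 / (1 + u) - 1 :=
    Real.log_le_sub_one_of_pos (by positivity)
  rw [Real.log_div one_ne_zero (by linarith), Real.log_one] at hlog
  have heq : 1 / (1 + u) - 1 = -(u / (1 + u)) := by field_simp; ring
  have h2 : u / (1 + u) ≤ Real.log (1 + u) := by
    rw [heq] at hlog; linarith
  have h3 : u / 2 ≤ u / (1 + u) := by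
    gcongr; linarith
  linarith

/-- The logarithmic "integration trick": restricted to sufficiently-visited
rounds, `∑ x_k / N_k ≤ c log(2 + ∑ x_k)` for an absolute constant `c`. -/
theorem stmt9 : ∃ c : ℝ, 0 < c ∧
    ∀ (K : ℕ) (H L : ℝ), 1 ≤ H → 1 ≤ L →
    ∀ x N : ℕ → ℝ, (∀ k, 0 ≤ x k ∧ x k ≤ H) →
    (∀ k, N k ≥ (1 / 2) * (∑ j ∈ Finset.range k, x j) - L) →
    (∑ k ∈ Finset.range K,
        if (∑ j ∈ Finset.range k, x j) ≥ 2 * L + 2 * H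
        then x k / N k else 0)
      ≤ c * Real.log (2 + ∑ k ∈ Finset.range K, x k) := by
  refine ⟨4, by norm_num, ?_⟩
  intro K H L hH hL x N hx hN
  set S : ℕ → ℝ := fun k => ∑ j ∈ Finset.range k, x j with hSdef
  have hSsucc : ∀ k, S (k + 1) = S k + x k := by
    intro k; simp [hSdef, Finset.sum_range_succ]
  have hS0 : ∀ k, 0 ≤ S k := fun k => Finset.sum_nonneg fun j _ => (hx j).1
  set φ : ℕ → ℝ := fun k => Real.log (max (S k - 2 * L) (2 * H)) with hφdef
  have hHpos : (0:ℝ) < 2 * H := by linarith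
  have hmaxpos : ∀ m, (0:ℝ) < max (S m - 2 * L) (2 * H) :=
    fun m => lt_max_of_lt_right hHpos
  have key : ∀ k, (if S k ≥ 2 * L + 2 * H then x k / N k else 0)
      ≤ 4 * (φ (k + 1) - φ k) := by
    intro k
    split_ifs with h
    · have hb : 2 * H ≤ S k - 2 * L := by linarith
      have hbpos : (0:ℝ) < S k - 2 * L := by linarith
      obtain ⟨hx0, hxH⟩ := hx k
      have hNk : (S k - 2 * L) / 2 ≤ N k := by
        have := hN k; simp only [hSdef] at this ⊢; linarith
      have hNpos : (0:ℝ) < (S k - 2 * L) / 2 := by linarith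
      have step1 : x k / N k ≤ x k / ((S k - 2 * L) / 2) := by
        gcongr
      have hu0 : 0 ≤ x k / (S k - 2 * L) := by positivity
      have hu1 : x k / (S k - 2 * L) ≤ 1 := by
        rw [div_le_one hbpos]; linarith
      have step2 := half_le_log_aux _ hu0 hu1
      have heq1 : (1 : ℝ) + x k / (S k - 2 * L) = (S k - 2 * L + x k) / (S k - 2 * L) := by
        field_simp
      have hφk : φ k = Real.log (S k - 2 * L) := by
        simp only [hφdef]; rw [max_eq_left hb]
      have hφk1 : φ (k + 1) = Real.log (S k - 2 * L + x k) := by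
        simp only [hφdef, hSsucc k]
        rw [max_eq_left (by linarith)]
        ring_nf
      rw [hφk, hφk1, ← Real.log_div (by linarith) (ne_of_gt hbpos), ← heq1]
      have step3 : x k / ((S k - 2 * L) / 2) = 4 * (x k / (S k - 2 * L) / 2) := by
        field_simp; ring
      calc x k / N k ≤ x k / ((S k - 2 * L) / 2) := step1
        _ = 4 * (x k / (S k - 2 * L) / 2) := step3
        _ ≤ 4 * Real.log (1 + x k / (S k - 2 * L)) := by linarith
    · have hmono : φ k ≤ φ (k + 1) := by
        apply Real.log_le_log (hmaxpos k)
        apply max_le_max _ le_rfl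
        rw [hSsucc k]; linarith [(hx k).1]
      linarith
  have hsum : (∑ k ∈ Finset.range K,
      if S k ≥ 2 * L + 2 * H then x k / N k else 0)
      ≤ ∑ k ∈ Finset.range K, 4 * (φ (k + 1) - φ k) :=
    Finset.sum_le_sum fun k _ => key k
  have htel : ∑ k ∈ Finset.range K, 4 * (φ (k + 1) - φ k) = 4 * (φ K - φ 0) := by
    rw [← Finset.mul_sum, Finset.sum_range_sub]
  have hφ0 : φ 0 = Real.log (2 * H) := by
    simp only [hφdef, hSdef]
    rw [Finset.sum_range_zero, max_eq_right (by linarith)]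
  have hφK : φ K ≤ Real.log (2 * H) + Real.log (2 + S K) := by
    rw [← Real.log_mul (ne_of_gt hHpos) (by have := hS0 K; intro hc; linarith)]
    apply Real.log_le_log (hmaxpos K)
    have h1 : S K - 2 * L ≤ 2 * H * (2 + S K) := by nlinarith [hS0 K]
    have h2 : 2 * H ≤ 2 * H * (2 + S K) := by nlinarith [hS0 K]
    exact max_le h1 h2
  have : 4 * (φ K - φ 0) ≤ 4 * Real.log (2 + S K) := by
    rw [hφ0]; linarith
  calc (∑ k ∈ Finset.range K,
      if S k ≥ 2 * L + 2 * H then x k / N k else 0)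
      ≤ 4 * (φ K - φ 0) := by rw [← htel]; exact hsum
    _ ≤ 4 * Real.log (2 + S K) := this
end

section
/- Consider a finite-horizon MDP with horizon $H$ and rewards $r_h(x,a) \in [0,1]$. For any policy $\pi$ and any starting state $x_1$, the sum over steps of the one-step conditional variances of the optimal-policy value process is bounded by $H^2$; formally, $\sum_{h=1}^{H} \mathbb{E}_{\pi}\big[\mathrm{Var}_{y\sim\mathbb{P}(\cdot\mid x_h,a_h)}\big(V^{\pi}_{h+1}(y)\big)\big] = \mathrm{Var}_{\pi}\Big(\sum_{h=1}^H r_h(x_h,a_h)\Big) \le H^2$, where the expectation is over trajectories generated by $\pi$ (law of total variance). -/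
set_option linter.unusedSectionVars false

section MDPaux

variable {S A : Type*} [Fintype S] [DecidableEq S]

noncomputable def mdpChain (P : S → A → S → ℝ) (π : ℕ → S → A) :
    (m : ℕ) → ℕ → S → (Fin m → S) → ℝ
  | 0, _, _, _ => 1
  | (m+1), s, x, σ => P x (π s x) (σ 0) * mdpChain P π m (s+1) (σ 0) (Fin.tail σ)

noncomputable def mdpRsum (π : ℕ → S → A) (r : ℕ → S → A → ℝ) :
    (m : ℕ) → ℕ → S → (Fin m → S) → ℝ
  | 0, _, _, _ => 0
  | (m+1), s, x, σ => r s x (π s x) + mdpRsum π r m (s+1) (σ 0) (Fin.tail σ)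

lemma sum_pi_succ {m : ℕ} (f : (Fin (m+1) → S) → ℝ) :
    ∑ τ, f τ = ∑ x, ∑ σ : Fin m → S, f (Fin.cons x σ) := by
  calc ∑ τ, f τ = ∑ p : S × (Fin m → S), f (Fin.cons p.1 p.2) :=
        (Fintype.sum_equiv (Fin.consEquiv (fun _ => S)) _ _ (fun p => rfl)).symm
    _ = ∑ x, ∑ σ : Fin m → S, f (Fin.cons x σ) := Fintype.sum_prod_type _

variable (P : S → A → S → ℝ) (π : ℕ → S → A) (r : ℕ → S → A → ℝ)

lemma mdpChain_sum_one (hP : ∀ x a, (∀ y, 0 ≤ P x a y) ∧ ∑ y, P x a y = 1) :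
    ∀ (m s : ℕ) (x : S), ∑ σ : Fin m → S, mdpChain P π m s x σ = 1 := by
  intro m
  induction m with
  | zero => intro s x; simp [mdpChain]
  | succ m ih =>
    intro s x
    rw [sum_pi_succ (fun σ => mdpChain P π (m+1) s x σ)]
    simp only [mdpChain, Fin.cons_zero, Fin.tail_cons]
    calc ∑ y, ∑ σ : Fin m → S, P x (π s x) y * mdpChain P π m (s+1) y σ
        = ∑ y, P x (π s x) y * ∑ σ : Fin m → S, mdpChain P π m (s+1) y σ := by
          simp [Finset.mul_sum]
      _ = ∑ y, P x (π s x) y := by simp [ih]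
      _ = 1 := (hP x (π s x)).2

lemma mdpChain_nonneg (hP : ∀ x a, (∀ y, 0 ≤ P x a y) ∧ ∑ y, P x a y = 1) :
    ∀ (m s : ℕ) (x : S) (σ : Fin m → S), 0 ≤ mdpChain P π m s x σ := by
  intro m
  induction m with
  | zero => intro s x σ; simp [mdpChain]
  | succ m ih =>
    intro s x σ
    exact mul_nonneg ((hP x (π s x)).1 _) (ih _ _ _)

end MDPaux

section MDPaux2

variable {S A : Type*} [Fintype S] [DecidableEq S]
variable (P : S → A → S → ℝ) (π : ℕ → S → A) (r : ℕ → S → A → ℝ)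

lemma mdpChain_exp_R {H : ℕ} (V : ℕ → S → ℝ)
    (hP : ∀ x a, (∀ y, 0 ≤ P x a y) ∧ ∑ y, P x a y = 1)
    (hV_top : ∀ x, V (H+1) x = 0)
    (hV : ∀ h, 1 ≤ h → h ≤ H → ∀ x,
      V h x = r h x (π h x) + ∑ y, P x (π h x) y * V (h+1) y) :
    ∀ (m s : ℕ), 1 ≤ s → s + m = H + 1 → ∀ x : S,
      ∑ σ : Fin m → S, mdpChain P π m s x σ * mdpRsum π r m s x σ = V s x := by
  intro m
  induction m with
  | zero =>
    intro s hs hsm x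
    have : s = H + 1 := by omega
    subst this
    simp [mdpChain, mdpRsum, hV_top]
  | succ m ih =>
    intro s hs hsm x
    have hsH : s ≤ H := by omega
    rw [sum_pi_succ (fun σ => mdpChain P π (m+1) s x σ * mdpRsum π r (m+1) s x σ)]
    simp only [mdpChain, mdpRsum, Fin.cons_zero, Fin.tail_cons]
    have key : ∀ y : S,
        ∑ σ : Fin m → S, (P x (π s x) y * mdpChain P π m (s+1) y σ) *
            (r s x (π s x) + mdpRsum π r m (s+1) y σ)
          = P x (π s x) y * (r s x (π s x) + V (s+1) y) := by
      intro y
      have h1 : ∑ σ : Fin m → S, mdpChain P π m (s+1) y σ = 1 :=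
        mdpChain_sum_one P π hP m (s+1) y
      have h2 : ∑ σ : Fin m → S, mdpChain P π m (s+1) y σ * mdpRsum π r m (s+1) y σ
          = V (s+1) y := ih (s+1) (by omega) (by omega) y
      calc ∑ σ : Fin m → S, (P x (π s x) y * mdpChain P π m (s+1) y σ) *
              (r s x (π s x) + mdpRsum π r m (s+1) y σ)
          = ∑ σ : Fin m → S, ((P x (π s x) y * r s x (π s x)) * mdpChain P π m (s+1) y σ
              + P x (π s x) y * (mdpChain P π m (s+1) y σ * mdpRsum π r m (s+1) y σ)) := by
            exact Finset.sum_congr rfl (fun σ _ => by ring)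
        _ = (P x (π s x) y * r s x (π s x)) * (∑ σ : Fin m → S, mdpChain P π m (s+1) y σ)
              + P x (π s x) y * (∑ σ : Fin m → S,
                  mdpChain P π m (s+1) y σ * mdpRsum π r m (s+1) y σ) := by
            rw [Finset.sum_add_distrib, Finset.mul_sum, Finset.mul_sum]
        _ = P x (π s x) y * (r s x (π s x) + V (s+1) y) := by rw [h1, h2]; ring
    calc ∑ y, ∑ σ : Fin m → S, (P x (π s x) y * mdpChain P π m (s+1) y σ) *
            (r s x (π s x) + mdpRsum π r m (s+1) y σ)
        = ∑ y, P x (π s x) y * (r s x (π s x) + V (s+1) y) :=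
          Finset.sum_congr rfl (fun y _ => key y)
      _ = (∑ y, P x (π s x) y) * r s x (π s x) + ∑ y, P x (π s x) y * V (s+1) y := by
          rw [Finset.sum_mul, ← Finset.sum_add_distrib]
          exact Finset.sum_congr rfl (fun y _ => by ring)
      _ = V s x := by rw [(hP x (π s x)).2, one_mul, ← hV s hs hsH x]

lemma mdpChain_exp_sq {H : ℕ} (V U : ℕ → S → ℝ)
    (hP : ∀ x a, (∀ y, 0 ≤ P x a y) ∧ ∑ y, P x a y = 1)
    (hV_top : ∀ x, V (H+1) x = 0)
    (hV : ∀ h, 1 ≤ h → h ≤ H → ∀ x,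
      V h x = r h x (π h x) + ∑ y, P x (π h x) y * V (h+1) y)
    (hU_top : ∀ x, U (H+1) x = 0)
    (hU : ∀ h, 1 ≤ h → h ≤ H → ∀ x,
      U h x = (∑ y, P x (π h x) y *
          (V (h+1) y - ∑ z, P x (π h x) z * V (h+1) z) ^ 2)
        + ∑ y, P x (π h x) y * U (h+1) y) :
    ∀ (m s : ℕ), 1 ≤ s → s + m = H + 1 → ∀ x : S,
      ∑ σ : Fin m → S, mdpChain P π m s x σ * (mdpRsum π r m s x σ - V s x) ^ 2
        = U s x := by
  intro m
  induction m with
  | zero =>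
    intro s hs hsm x
    have : s = H + 1 := by omega
    subst this
    simp [mdpChain, mdpRsum, hV_top, hU_top]
  | succ m ih =>
    intro s hs hsm x
    have hsH : s ≤ H := by omega
    rw [sum_pi_succ (fun σ => mdpChain P π (m+1) s x σ * (mdpRsum π r (m+1) s x σ - V s x) ^ 2)]
    simp only [mdpChain, mdpRsum, Fin.cons_zero, Fin.tail_cons]
    have key : ∀ y : S,
        ∑ σ : Fin m → S, (P x (π s x) y * mdpChain P π m (s+1) y σ) *
            (r s x (π s x) + mdpRsum π r m (s+1) y σ - V s x) ^ 2
          = P x (π s x) y * ((r s x (π s x) + V (s+1) y - V s x) ^ 2 + U (s+1) y) := by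
      intro y
      have h1 : ∑ σ : Fin m → S, mdpChain P π m (s+1) y σ = 1 :=
        mdpChain_sum_one P π hP m (s+1) y
      have h2 : ∑ σ : Fin m → S, mdpChain P π m (s+1) y σ * mdpRsum π r m (s+1) y σ
          = V (s+1) y := mdpChain_exp_R P π r V hP hV_top hV m (s+1) (by omega) (by omega) y
      have h3 : ∑ σ : Fin m → S, mdpChain P π m (s+1) y σ * (mdpRsum π r m (s+1) y σ - V (s+1) y) ^ 2
          = U (s+1) y := ih (s+1) (by omega) (by omega) y
      set c : ℝ := r s x (π s x) + V (s+1) y - V s x with hc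
      calc ∑ σ : Fin m → S, (P x (π s x) y * mdpChain P π m (s+1) y σ) *
              (r s x (π s x) + mdpRsum π r m (s+1) y σ - V s x) ^ 2
          = P x (π s x) y * ∑ σ : Fin m → S,
              ((c ^ 2 - 2 * c * V (s+1) y) * mdpChain P π m (s+1) y σ
               + (2 * c) * (mdpChain P π m (s+1) y σ * mdpRsum π r m (s+1) y σ)
               + mdpChain P π m (s+1) y σ * (mdpRsum π r m (s+1) y σ - V (s+1) y) ^ 2) := by
            rw [Finset.mul_sum]
            exact Finset.sum_congr rfl (fun σ _ => by rw [hc]; ring)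
        _ = P x (π s x) y * ((c ^ 2 - 2 * c * V (s+1) y) * (∑ σ : Fin m → S, mdpChain P π m (s+1) y σ)
               + (2 * c) * (∑ σ : Fin m → S, mdpChain P π m (s+1) y σ * mdpRsum π r m (s+1) y σ)
               + ∑ σ : Fin m → S, mdpChain P π m (s+1) y σ * (mdpRsum π r m (s+1) y σ - V (s+1) y) ^ 2) := by
            rw [Finset.sum_add_distrib, Finset.sum_add_distrib, Finset.mul_sum, Finset.mul_sum]
        _ = P x (π s x) y * ((c ^ 2 - 2 * c * V (s+1) y) * 1 + (2 * c) * V (s+1) y + U (s+1) y) := by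
            rw [h1, h2, h3]
        _ = P x (π s x) y * (c ^ 2 + U (s+1) y) := by ring
    have hbell : ∀ y : S, r s x (π s x) + V (s+1) y - V s x
        = V (s+1) y - ∑ z, P x (π s x) z * V (s+1) z := by
      intro y
      rw [hV s hs hsH x]; ring
    calc ∑ y, ∑ σ : Fin m → S, (P x (π s x) y * mdpChain P π m (s+1) y σ) *
            (r s x (π s x) + mdpRsum π r m (s+1) y σ - V s x) ^ 2
        = ∑ y, P x (π s x) y * ((V (s+1) y - ∑ z, P x (π s x) z * V (s+1) z) ^ 2 + U (s+1) y) := by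
          refine Finset.sum_congr rfl (fun y _ => ?_)
          rw [key y, hbell y]
      _ = (∑ y, P x (π s x) y * (V (s+1) y - ∑ z, P x (π s x) z * V (s+1) z) ^ 2)
            + ∑ y, P x (π s x) y * U (s+1) y := by
          rw [← Finset.sum_add_distrib]
          exact Finset.sum_congr rfl (fun y _ => by ring)
      _ = U s x := (hU s hs hsH x).symm

end MDPaux2

section MDPaux3

variable {S A : Type*} [Fintype S] [DecidableEq S]
variable (P : S → A → S → ℝ) (π : ℕ → S → A) (r : ℕ → S → A → ℝ)

lemma prod_eq_mdpChain :
    ∀ (m s : ℕ) (x : S) (σ : Fin m → S),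
      (∏ h : Fin m, P ((Fin.cons x σ : Fin (m+1) → S) h.castSucc)
          (π (h.1 + s) ((Fin.cons x σ : Fin (m+1) → S) h.castSucc)) ((Fin.cons x σ : Fin (m+1) → S) h.succ))
        = mdpChain P π m s x σ := by
  intro m
  induction m with
  | zero => intro s x σ; simp [mdpChain]
  | succ m ih =>
    intro s x σ
    rw [Fin.prod_univ_succ]
    have h0 : ((Fin.cons x σ : Fin (m+2) → S) ((0 : Fin (m+1)).castSucc)) = x := by simp
    have h0' : ((Fin.cons x σ : Fin (m+2) → S) ((0 : Fin (m+1)).succ)) = σ 0 := by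
      rw [Fin.cons_succ]
    have hstep : ∀ j : Fin m,
        P ((Fin.cons x σ : Fin (m+2) → S) j.succ.castSucc) (π (j.succ.1 + s) ((Fin.cons x σ : Fin (m+2) → S) j.succ.castSucc))
            ((Fin.cons x σ : Fin (m+2) → S) j.succ.succ)
          = P (σ j.castSucc) (π (j.1 + (s+1)) (σ j.castSucc)) (σ j.succ) := by
      intro j
      have ht : j.succ.1 + s = j.1 + (s+1) := by rw [Fin.val_succ]; omega
      rw [← Fin.succ_castSucc, Fin.cons_succ, Fin.cons_succ, ht]
    rw [h0, h0']
    simp only [Fin.val_zero, Nat.zero_add]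
    rw [Finset.prod_congr rfl (fun j _ => hstep j)]
    have := ih (s+1) (σ 0) (Fin.tail σ)
    rw [Fin.cons_self_tail] at this
    rw [this, mdpChain]

lemma sum_eq_mdpRsum :
    ∀ (m s : ℕ) (x : S) (σ : Fin m → S),
      (∑ h : Fin m, r (h.1 + s) ((Fin.cons x σ : Fin (m+1) → S) h.castSucc)
          (π (h.1 + s) ((Fin.cons x σ : Fin (m+1) → S) h.castSucc)))
        = mdpRsum π r m s x σ := by
  intro m
  induction m with
  | zero => intro s x σ; simp [mdpRsum]
  | succ m ih =>
    intro s x σ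
    rw [Fin.sum_univ_succ]
    have h0 : ((Fin.cons x σ : Fin (m+2) → S) ((0 : Fin (m+1)).castSucc)) = x := by simp
    have hstep : ∀ j : Fin m,
        r (j.succ.1 + s) ((Fin.cons x σ : Fin (m+2) → S) j.succ.castSucc)
            (π (j.succ.1 + s) ((Fin.cons x σ : Fin (m+2) → S) j.succ.castSucc))
          = r (j.1 + (s+1)) (σ j.castSucc) (π (j.1 + (s+1)) (σ j.castSucc)) := by
      intro j
      have ht : j.succ.1 + s = j.1 + (s+1) := by rw [Fin.val_succ]; omega
      rw [← Fin.succ_castSucc, Fin.cons_succ, ht]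
    rw [h0]
    simp only [Fin.val_zero, Nat.zero_add]
    rw [Finset.sum_congr rfl (fun j _ => hstep j)]
    have := ih (s+1) (σ 0) (Fin.tail σ)
    rw [Fin.cons_self_tail] at this
    rw [this, mdpRsum]

lemma V_bounds {H : ℕ} (V : ℕ → S → ℝ)
    (hP : ∀ x a, (∀ y, 0 ≤ P x a y) ∧ ∑ y, P x a y = 1)
    (hr : ∀ h x a, r h x a ∈ Set.Icc (0:ℝ) 1)
    (hV_top : ∀ x, V (H+1) x = 0)
    (hV : ∀ h, 1 ≤ h → h ≤ H → ∀ x,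
      V h x = r h x (π h x) + ∑ y, P x (π h x) y * V (h+1) y) :
    ∀ (m s : ℕ), 1 ≤ s → s + m = H + 1 → ∀ x : S,
      0 ≤ V s x ∧ V s x ≤ (m : ℝ) := by
  intro m
  induction m with
  | zero =>
    intro s hs hsm x
    have : s = H + 1 := by omega
    subst this
    simp [hV_top]
  | succ m ih =>
    intro s hs hsm x
    have hsH : s ≤ H := by omega
    rw [hV s hs hsH x]
    have hih : ∀ y, 0 ≤ V (s+1) y ∧ V (s+1) y ≤ (m : ℝ) :=
      fun y => ih (s+1) (by omega) (by omega) y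
    have hsum0 : 0 ≤ ∑ y, P x (π s x) y * V (s+1) y :=
      Finset.sum_nonneg fun y _ => mul_nonneg ((hP x (π s x)).1 y) (hih y).1
    have hsum1 : ∑ y, P x (π s x) y * V (s+1) y ≤ (m : ℝ) := by
      calc ∑ y, P x (π s x) y * V (s+1) y ≤ ∑ y, P x (π s x) y * (m : ℝ) :=
            Finset.sum_le_sum fun y _ =>
              mul_le_mul_of_nonneg_left (hih y).2 ((hP x (π s x)).1 y)
        _ = (m : ℝ) := by rw [← Finset.sum_mul, (hP x (π s x)).2, one_mul]
    constructor
    · have := (hr s x (π s x)).1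
      linarith
    · have := (hr s x (π s x)).2
      push_cast
      linarith

end MDPaux3

section MDPaux4

variable {S A : Type*} [Fintype S] [DecidableEq S]

noncomputable def mdpUf (P : S → A → S → ℝ) (π : ℕ → S → A) (V : ℕ → S → ℝ) (H : ℕ) :
    ℕ → S → ℝ
  | 0, _ => 0
  | (k+1), x =>
      (∑ y, P x (π (H - k) x) y *
        (V (H - k + 1) y - ∑ z, P x (π (H - k) x) z * V (H - k + 1) z) ^ 2)
      + ∑ y, P x (π (H - k) x) y * mdpUf P π V H k y

variable (P : S → A → S → ℝ) (π : ℕ → S → A) (V : ℕ → S → ℝ) (H : ℕ)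

lemma mdpUf_top (x : S) : mdpUf P π V H (H + 1 - (H+1)) x = 0 := by
  rw [Nat.sub_self]
  rfl

lemma mdpUf_rec (h : ℕ) (h1 : 1 ≤ h) (h2 : h ≤ H) (x : S) :
    mdpUf P π V H (H + 1 - h) x
      = (∑ y, P x (π h x) y *
          (V (h+1) y - ∑ z, P x (π h x) z * V (h+1) z) ^ 2)
        + ∑ y, P x (π h x) y * mdpUf P π V H (H + 1 - (h+1)) y := by
  have e1 : H + 1 - h = (H - h) + 1 := by omega
  have e2 : H - (H - h) = h := by omega
  have e3 : H + 1 - (h+1) = H - h := by omega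
  rw [e1, e3]
  show (∑ y, P x (π (H - (H - h)) x) y *
        (V (H - (H - h) + 1) y - ∑ z, P x (π (H - (H - h)) x) z * V (H - (H - h) + 1) z) ^ 2)
      + ∑ y, P x (π (H - (H - h)) x) y * mdpUf P π V H (H - h) y
    = _
  rw [e2]

end MDPaux4

/-- Law of total variance for a finite-horizon MDP: the sum over steps of the
expected one-step conditional variances of the value process equals the
variance of the cumulative reward, which is at most `H²`. -/
theorem stmt10 {S A : Type*} [Fintype S] [Fintype A] [DecidableEq S]
    (H : ℕ) (hH : 1 ≤ H)
    (P : S → A → S → ℝ)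
    (hP : ∀ x a, (∀ y, 0 ≤ P x a y) ∧ ∑ y, P x a y = 1)
    (r : ℕ → S → A → ℝ) (hr : ∀ h x a, r h x a ∈ Set.Icc (0:ℝ) 1)
    (π : ℕ → S → A) (x1 : S)
    (V : ℕ → S → ℝ)
    (hV_top : ∀ x, V (H+1) x = 0)
    (hV : ∀ h, 1 ≤ h → h ≤ H → ∀ x,
      V h x = r h x (π h x) + ∑ y, P x (π h x) y * V (h+1) y)
    (ρ : ℕ → S → ℝ)
    (hρ1 : ∀ x, ρ 1 x = if x = x1 then 1 else 0)
    (hρ : ∀ h, 1 ≤ h → h ≤ H → ∀ y,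
      ρ (h+1) y = ∑ x, ρ h x * P x (π h x) y)
    (prob : (Fin (H+1) → S) → ℝ)
    (hprob : ∀ τ, prob τ = (if τ 0 = x1 then (1:ℝ) else 0) *
      ∏ h : Fin H, P (τ h.castSucc) (π (h.1 + 1) (τ h.castSucc)) (τ h.succ))
    (R : (Fin (H+1) → S) → ℝ)
    (hR : ∀ τ, R τ = ∑ h : Fin H,
      r (h.1 + 1) (τ h.castSucc) (π (h.1 + 1) (τ h.castSucc))) :
    (∑ h ∈ Finset.Icc 1 H, ∑ x, ρ h x *
        (∑ y, P x (π h x) y *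
          (V (h+1) y - ∑ z, P x (π h x) z * V (h+1) z) ^ 2))
      = (∑ τ, prob τ * (R τ - ∑ τ', prob τ' * R τ') ^ 2)
    ∧ (∑ τ, prob τ * (R τ - ∑ τ', prob τ' * R τ') ^ 2) ≤ (H : ℝ) ^ 2 := by
  classical
  -- the conditional second-moment function
  set U : ℕ → S → ℝ := fun h x => mdpUf P π V H (H + 1 - h) x with hUdef
  have hU_top : ∀ x, U (H+1) x = 0 := fun x => mdpUf_top P π V H x
  have hU : ∀ h, 1 ≤ h → h ≤ H → ∀ x,
      U h x = (∑ y, P x (π h x) y *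
          (V (h+1) y - ∑ z, P x (π h x) z * V (h+1) z) ^ 2)
        + ∑ y, P x (π h x) y * U (h+1) y :=
    fun h h1 h2 x => mdpUf_rec P π V H h h1 h2 x
  -- transfer of trajectory sums to the chain formulation
  have probconv : ∀ F : (Fin (H+1) → S) → ℝ,
      ∑ τ, prob τ * F τ
        = ∑ σ : Fin H → S, mdpChain P π H 1 x1 σ * F (Fin.cons x1 σ) := by
    intro F
    rw [sum_pi_succ (fun τ => prob τ * F τ)]
    calc ∑ x, ∑ σ : Fin H → S, prob (Fin.cons x σ) * F (Fin.cons x σ)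
        = ∑ x, (if x = x1 then (1:ℝ) else 0) *
            ∑ σ : Fin H → S, mdpChain P π H 1 x σ * F (Fin.cons x σ) := by
          refine Finset.sum_congr rfl (fun x _ => ?_)
          rw [Finset.mul_sum]
          refine Finset.sum_congr rfl (fun σ _ => ?_)
          rw [hprob (Fin.cons x σ)]
          have hc : ((Fin.cons x σ : Fin (H+1) → S) 0) = x := rfl
          rw [hc, prod_eq_mdpChain P π H 1 x σ]
          ring
      _ = ∑ x, (if x = x1
            then (∑ σ : Fin H → S, mdpChain P π H 1 x σ * F (Fin.cons x σ)) else 0) := by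
          refine Finset.sum_congr rfl (fun x _ => ?_)
          split <;> simp
      _ = ∑ σ : Fin H → S, mdpChain P π H 1 x1 σ * F (Fin.cons x1 σ) := by
          rw [Finset.sum_ite_eq' Finset.univ x1]
          simp
  have Rconv : ∀ σ : Fin H → S, R (Fin.cons x1 σ) = mdpRsum π r H 1 x1 σ := by
    intro σ
    rw [hR (Fin.cons x1 σ)]
    exact sum_eq_mdpRsum π r H 1 x1 σ
  -- expected reward equals V 1 x1
  have hER : (∑ τ', prob τ' * R τ') = V 1 x1 := by
    rw [probconv R]
    calc ∑ σ : Fin H → S, mdpChain P π H 1 x1 σ * R (Fin.cons x1 σ)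
        = ∑ σ : Fin H → S, mdpChain P π H 1 x1 σ * mdpRsum π r H 1 x1 σ :=
          Finset.sum_congr rfl (fun σ _ => by rw [Rconv σ])
      _ = V 1 x1 := mdpChain_exp_R P π r V hP hV_top hV H 1 (le_refl 1) (by omega) x1
  -- variance equals U 1 x1
  have hVar : (∑ τ, prob τ * (R τ - ∑ τ', prob τ' * R τ') ^ 2) = U 1 x1 := by
    rw [hER]
    calc ∑ τ, prob τ * (R τ - V 1 x1) ^ 2
        = ∑ σ : Fin H → S, mdpChain P π H 1 x1 σ * (R (Fin.cons x1 σ) - V 1 x1) ^ 2 :=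
          probconv (fun τ => (R τ - V 1 x1) ^ 2)
      _ = ∑ σ : Fin H → S, mdpChain P π H 1 x1 σ * (mdpRsum π r H 1 x1 σ - V 1 x1) ^ 2 :=
          Finset.sum_congr rfl (fun σ _ => by rw [Rconv σ])
      _ = U 1 x1 :=
          mdpChain_exp_sq P π r V U hP hV_top hV hU_top hU H 1 (le_refl 1) (by omega) x1
  -- telescoping for the left-hand side
  set g : ℕ → ℝ := fun h => ∑ x, ρ h x * U h x with hgdef
  have tele : ∀ h, 1 ≤ h → h ≤ H →
      (∑ x, ρ h x * (∑ y, P x (π h x) y *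
          (V (h+1) y - ∑ z, P x (π h x) z * V (h+1) z) ^ 2))
        = g h - g (h+1) := by
    intro h h1 h2
    have hg : g h = (∑ x, ρ h x * (∑ y, P x (π h x) y *
          (V (h+1) y - ∑ z, P x (π h x) z * V (h+1) z) ^ 2)) + g (h+1) := by
      calc g h
          = ∑ x, (ρ h x * (∑ y, P x (π h x) y *
              (V (h+1) y - ∑ z, P x (π h x) z * V (h+1) z) ^ 2)
            + ∑ y, ρ h x * (P x (π h x) y * U (h+1) y)) := by
            refine Finset.sum_congr rfl (fun x _ => ?_)
            rw [hU h h1 h2 x, mul_add]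
            congr 1
            rw [Finset.mul_sum]
        _ = (∑ x, ρ h x * (∑ y, P x (π h x) y *
              (V (h+1) y - ∑ z, P x (π h x) z * V (h+1) z) ^ 2))
            + ∑ x, ∑ y, ρ h x * (P x (π h x) y * U (h+1) y) := Finset.sum_add_distrib
        _ = (∑ x, ρ h x * (∑ y, P x (π h x) y *
              (V (h+1) y - ∑ z, P x (π h x) z * V (h+1) z) ^ 2))
            + ∑ y, ρ (h+1) y * U (h+1) y := by
            congr 1
            rw [Finset.sum_comm]
            refine Finset.sum_congr rfl (fun y _ => ?_)
            rw [hρ h h1 h2 y, Finset.sum_mul]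
            exact Finset.sum_congr rfl (fun x _ => by ring)
    rw [hg]
    ring
  have gtop : g (H+1) = 0 := by
    simp [hgdef, hU_top]
  have gone : g 1 = U 1 x1 := by
    calc g 1 = ∑ x, (if x = x1 then U 1 x else 0) := by
          refine Finset.sum_congr rfl (fun x _ => ?_)
          rw [hρ1 x]
          split <;> simp
      _ = U 1 x1 := by rw [Finset.sum_ite_eq' Finset.univ x1]; simp
  have hLHS : (∑ h ∈ Finset.Icc 1 H, ∑ x, ρ h x *
        (∑ y, P x (π h x) y *
          (V (h+1) y - ∑ z, P x (π h x) z * V (h+1) z) ^ 2))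
      = U 1 x1 := by
    calc (∑ h ∈ Finset.Icc 1 H, ∑ x, ρ h x *
        (∑ y, P x (π h x) y *
          (V (h+1) y - ∑ z, P x (π h x) z * V (h+1) z) ^ 2))
        = ∑ h ∈ Finset.Icc 1 H, (g h - g (h+1)) := by
          refine Finset.sum_congr rfl (fun h hmem => ?_)
          rw [Finset.mem_Icc] at hmem
          exact tele h hmem.1 hmem.2
      _ = ∑ i ∈ Finset.range H, (g (1+i) - g (1+i+1)) := by
          rw [← Finset.Ico_add_one_right_eq_Icc, Finset.sum_Ico_eq_sum_range]
          simp
      _ = g (1+0) - g (1+H) := Finset.sum_range_sub' (fun i => g (1+i)) H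
      _ = U 1 x1 := by
          have e1 : 1 + 0 = 1 := rfl
          have e2 : 1 + H = H + 1 := by omega
          rw [e1, e2, gtop, gone, sub_zero]
  -- the bound
  have hprob_nonneg : ∀ τ, 0 ≤ prob τ := by
    intro τ
    rw [hprob τ]
    refine mul_nonneg ?_ (Finset.prod_nonneg fun h _ => (hP _ _).1 _)
    split <;> norm_num
  have hprob_sum : (∑ τ, prob τ) = 1 := by
    have h1 := probconv (fun _ => (1:ℝ))
    simpa using h1.trans (by simpa using mdpChain_sum_one P π hP H 1 x1)
  have hRlb : ∀ τ, 0 ≤ R τ := by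
    intro τ
    rw [hR τ]
    exact Finset.sum_nonneg fun h _ => (hr _ _ _).1
  have hRub : ∀ τ, R τ ≤ (H : ℝ) := by
    intro τ
    rw [hR τ]
    calc (∑ h : Fin H, r (h.1 + 1) (τ h.castSucc) (π (h.1 + 1) (τ h.castSucc)))
        ≤ ∑ _h : Fin H, (1:ℝ) := Finset.sum_le_sum fun h _ => (hr _ _ _).2
      _ = (H : ℝ) := by simp
  have hV1 : 0 ≤ V 1 x1 ∧ V 1 x1 ≤ (H : ℝ) := by
    have := V_bounds P π r V hP hr hV_top hV H 1 (le_refl 1) (by omega) x1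
    exact this
  have hBound : (∑ τ, prob τ * (R τ - ∑ τ', prob τ' * R τ') ^ 2) ≤ (H : ℝ) ^ 2 := by
    rw [hER]
    calc ∑ τ, prob τ * (R τ - V 1 x1) ^ 2
        ≤ ∑ τ, prob τ * (H : ℝ) ^ 2 := by
          refine Finset.sum_le_sum fun τ _ => ?_
          refine mul_le_mul_of_nonneg_left ?_ (hprob_nonneg τ)
          have h1 := hRlb τ
          have h2 := hRub τ
          exact sq_le_sq' (by linarith [hV1.1, hV1.2]) (by linarith [hV1.1, hV1.2])
      _ = (H : ℝ) ^ 2 := by rw [← Finset.sum_mul, hprob_sum, one_mul]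
  exact ⟨hLHS.trans hVar.symm, hBound⟩
end

section
/- Consider a finite-horizon MDP with horizon $H$, true kernel $\mathbb{P}$, empirical kernel $\widehat{\mathbb{P}}$, and rewards $r_h \in [0,1]$. Let $V_h$ be optimistic values built from bonus $b$ (i.e. $V_{H+1} = 0$, $Q_h(x,a) = \min\{H, r_h(x,a) + b(x,a) + \widehat{\mathbb{P}}V_{h+1}(x,a)\}$, $V_h(x)=\max_a Q_h(x,a)$, and $\pi_h(x)=\arg\max_a Q_h(x,a)$), and let $\bar V_h$ be the zero-reward optimistic values built with bonus $c(x,a) := \frac{3H^2 S\iota}{N(x,a)} + 2 b(x,a)$ (i.e. $\bar V_{H+1}=0$, $\bar Q_h(x,a)=\min\{H, c(x,a) + \widehat{\mathbb{P}}\bar V_{h+1}(x,a)\}$, $\bar V_h(x)=\max_a \bar Q_h(x,a)$). Assume: (a) $|(\widehat{\mathbb{P}} - \mathbb{P})V^*_{h+1}(x,a)| \le b(x,a)$ for all $x,a,h$; and (b) for all $x,a,h$ and all $0 \le V' \le V'' \le H$ pointwise, $|(\widehat{\mathbb{P}}-\mathbb{P})(V''-V')(x,a)| \le \frac{1}{H}\widehat{\mathbb{P}}(V''-V')(x,a)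 + \frac{3H^2S\iota}{N(x,a)}$. Then for all states $x$ and steps $h$: $V_h(x) - V^{\pi}_h(x) \le (1+\tfrac{1}{H})^{H-h+1} \bar V_h(x)$, where $\pi$ is the greedy policy for $Q$ and $V^\pi$ its true value. In particular $V_1(x_1) - V^\pi_1(x_1) \le e\cdot\bar V_1(x_1)$. -/
/-- Planning error dominated by the zero-reward exploration value: under the
concentration hypotheses, `V_h(x) - V^π_h(x) ≤ (1+1/H)^{H-h+1} V̄_h(x)`, and in
particular `V_1(x₁) - V^π_1(x₁) ≤ e ⬝ V̄_1(x₁)`. -/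
theorem stmt12 {S A : Type*} [Fintype S] [Fintype A] [Nonempty A]
    (H : ℕ) (hH : 1 ≤ H)
    (P Phat : S → A → S → ℝ)
    (hP : ∀ x a, (∀ y, 0 ≤ P x a y) ∧ ∑ y, P x a y = 1)
    (hPhat : ∀ x a, (∀ y, 0 ≤ Phat x a y) ∧ ∑ y, Phat x a y = 1)
    (r : ℕ → S → A → ℝ) (hr : ∀ h x a, r h x a ∈ Set.Icc (0:ℝ) 1)
    (b : S → A → ℝ) (hb : ∀ x a, 0 ≤ b x a)
    (N : S → A → ℝ) (hN : ∀ x a, 0 < N x a) (ι : ℝ) (hι : 1 ≤ ι)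
    (c : S → A → ℝ)
    (hc : ∀ x a, c x a =
      3 * (H : ℝ) ^ 2 * (Fintype.card S : ℝ) * ι / N x a + 2 * b x a)
    (Vstar : ℕ → S → ℝ)
    (hVstar_top : ∀ x, Vstar (H+1) x = 0)
    (hVstar : ∀ h, 1 ≤ h → h ≤ H → ∀ x, Vstar h x =
      Finset.univ.sup' Finset.univ_nonempty
        (fun a => r h x a + ∑ y, P x a y * Vstar (h+1) y))
    (Q : ℕ → S → A → ℝ) (V : ℕ → S → ℝ) (π : ℕ → S → A)
    (hV_top : ∀ x, V (H+1) x = 0)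
    (hQ : ∀ h, 1 ≤ h → h ≤ H → ∀ x a, Q h x a =
      min (H : ℝ) (r h x a + b x a + ∑ y, Phat x a y * V (h+1) y))
    (hV : ∀ h, 1 ≤ h → h ≤ H → ∀ x,
      V h x = Finset.univ.sup' Finset.univ_nonempty (fun a => Q h x a))
    (hπ : ∀ h, 1 ≤ h → h ≤ H → ∀ x, Q h x (π h x) = V h x)
    (Vπ : ℕ → S → ℝ)
    (hVπ_top : ∀ x, Vπ (H+1) x = 0)
    (hVπ : ∀ h, 1 ≤ h → h ≤ H → ∀ x,
      Vπ h x = r h x (π h x) + ∑ y, P x (π h x) y * Vπ (h+1) y)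
    (Qbar : ℕ → S → A → ℝ) (Vbar : ℕ → S → ℝ)
    (hVbar_top : ∀ x, Vbar (H+1) x = 0)
    (hQbar : ∀ h, 1 ≤ h → h ≤ H → ∀ x a, Qbar h x a =
      min (H : ℝ) (c x a + ∑ y, Phat x a y * Vbar (h+1) y))
    (hVbar : ∀ h, 1 ≤ h → h ≤ H → ∀ x,
      Vbar h x = Finset.univ.sup' Finset.univ_nonempty (fun a => Qbar h x a))
    (hconc_b : ∀ h, 1 ≤ h → h ≤ H → ∀ x a,
      |∑ y, (Phat x a y - P x a y) * Vstar (h+1) y| ≤ b x a)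
    (hconc_lo : ∀ h, 1 ≤ h → h ≤ H → ∀ x a, ∀ V' V'' : S → ℝ,
      (∀ y, 0 ≤ V' y) → (∀ y, V' y ≤ V'' y) → (∀ y, V'' y ≤ H) →
      |∑ y, (Phat x a y - P x a y) * (V'' y - V' y)| ≤
        (1 / (H : ℝ)) * (∑ y, Phat x a y * (V'' y - V' y)) +
          3 * (H : ℝ) ^ 2 * (Fintype.card S : ℝ) * ι / N x a) :
    (∀ h, 1 ≤ h → h ≤ H + 1 → ∀ x,
      V h x - Vπ h x ≤ (1 + 1 / (H : ℝ)) ^ (H + 1 - h) * Vbar h x)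
    ∧ ∀ x1, V 1 x1 - Vπ 1 x1 ≤ Real.exp 1 * Vbar 1 x1 := by
  have hHr : (1:ℝ) ≤ (H:ℝ) := by exact_mod_cast hH
  have hHpos : (0:ℝ) < (H:ℝ) := lt_of_lt_of_le one_pos hHr
  have hκ1 : (1:ℝ) ≤ 1 + 1/(H:ℝ) := by
    have : (0:ℝ) ≤ 1/(H:ℝ) := by positivity
    linarith
  have hι0 : (0:ℝ) ≤ ι := le_trans zero_le_one hι
  have hK0 : ∀ x a, (0:ℝ) ≤ 3 * (H:ℝ)^2 * (Fintype.card S : ℝ) * ι / N x a := by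
    intro x a
    apply div_nonneg (by positivity) (hN x a).le
  have hc0 : ∀ x a, 0 ≤ c x a := by
    intro x a
    rw [hc]
    have := hK0 x a
    have := hb x a
    linarith
  have key : ∀ d h, h + d = H + 1 → 1 ≤ h →
      (∀ x, 0 ≤ Vπ h x) ∧ (∀ x, Vπ h x ≤ Vstar h x) ∧
      (∀ x, Vstar h x ≤ V h x) ∧ (∀ x, Vstar h x ≤ (H:ℝ) + 1 - h) ∧
      (∀ x, V h x ≤ (H:ℝ)) ∧ (∀ x, 0 ≤ Vbar h x) ∧
      (∀ x, V h x - Vπ h x ≤ (1 + 1/(H:ℝ)) ^ (H + 1 - h) * Vbar h x) := by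
    intro d
    induction d with
    | zero =>
      intro h hh _
      simp only [Nat.add_zero] at hh
      subst hh
      refine ⟨?_, ?_, ?_, ?_, ?_, ?_, ?_⟩ <;> intro x <;>
        simp [hVπ_top, hVstar_top, hV_top, hVbar_top] <;> push_cast <;> linarith
    | succ d ih =>
      intro h hh hh1
      have hhH : h ≤ H := by omega
      obtain ⟨ihVπ0, ihVπle, ihopt, ihVsb, ihVH, ihVbar0, ihmain⟩ :=
        ih (h+1) (by omega) (by omega)
      have ihVs0 : ∀ y, 0 ≤ Vstar (h+1) y := fun y => le_trans (ihVπ0 y) (ihVπle y)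
      have ihVsH : ∀ y, Vstar (h+1) y ≤ (H:ℝ) := fun y => le_trans (ihopt y) (ihVH y)
      -- part A
      have hA : ∀ x, 0 ≤ Vπ h x := by
        intro x
        rw [hVπ h hh1 hhH x]
        have := (hr h x (π h x)).1
        have hs : (0:ℝ) ≤ ∑ y, P x (π h x) y * Vπ (h+1) y :=
          Finset.sum_nonneg fun y _ => mul_nonneg ((hP x (π h x)).1 y) (ihVπ0 y)
        linarith
      -- part B
      have hB : ∀ x, Vπ h x ≤ Vstar h x := by
        intro x
        rw [hVπ h hh1 hhH x, hVstar h hh1 hhH x]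
        refine le_trans ?_
          (Finset.le_sup' (fun a => r h x a + ∑ y, P x a y * Vstar (h+1) y)
            (Finset.mem_univ (π h x)))
        refine add_le_add (le_refl _) (Finset.sum_le_sum ?_)
        intro y _
        exact mul_le_mul_of_nonneg_left (ihVπle y) ((hP x (π h x)).1 y)
      -- helper: ∑ P * const
      have hsumP : ∀ x a, ∑ y, P x a y * Vstar (h+1) y ≤ (H:ℝ) - h := by
        intro x a
        calc ∑ y, P x a y * Vstar (h+1) y
            ≤ ∑ y, P x a y * ((H:ℝ) - h) := by
              apply Finset.sum_le_sum
              intro y _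
              apply mul_le_mul_of_nonneg_left _ ((hP x a).1 y)
              have := ihVsb y
              push_cast at this ⊢
              linarith
          _ = (H:ℝ) - h := by
              rw [← Finset.sum_mul, (hP x a).2, one_mul]
      -- part D' (Vstar bound)
      have hD' : ∀ x, Vstar h x ≤ (H:ℝ) + 1 - h := by
        intro x
        rw [hVstar h hh1 hhH x]
        apply Finset.sup'_le
        intro a _
        have h1 := hsumP x a
        have h2 := (hr h x a).2
        linarith
      -- part C
      have hC : ∀ x, Vstar h x ≤ V h x := by
        intro x
        rw [hVstar h hh1 hhH x, hV h hh1 hhH x]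
        apply Finset.sup'_le
        intro a _
        refine le_trans ?_ (Finset.le_sup' _ (Finset.mem_univ a))
        rw [hQ h hh1 hhH x a]
        apply le_min
        · have h1 := hsumP x a
          have h2 := (hr h x a).2
          have h3 : (1:ℝ) ≤ ((h:ℕ) : ℝ) := by exact_mod_cast hh1
          linarith
        · have habs := (abs_le.mp (hconc_b h hh1 hhH x a)).1
          have e1 : ∑ y, (Phat x a y - P x a y) * Vstar (h+1) y
              = ∑ y, Phat x a y * Vstar (h+1) y - ∑ y, P x a y * Vstar (h+1) y := by
            rw [← Finset.sum_sub_distrib]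
            exact Finset.sum_congr rfl fun y _ => by ring
          rw [e1] at habs
          have h2 : ∑ y, Phat x a y * Vstar (h+1) y ≤ ∑ y, Phat x a y * V (h+1) y := by
            apply Finset.sum_le_sum
            intro y _
            exact mul_le_mul_of_nonneg_left (ihopt y) ((hPhat x a).1 y)
          linarith
      -- part D
      have hD : ∀ x, V h x ≤ (H:ℝ) := by
        intro x
        rw [hV h hh1 hhH x]
        apply Finset.sup'_le
        intro a _
        rw [hQ h hh1 hhH x a]
        exact min_le_left _ _
      -- part E
      have hE : ∀ x, 0 ≤ Vbar h x := by
        intro x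
        rw [hVbar h hh1 hhH x]
        refine le_trans ?_ (Finset.le_sup' _ (Finset.mem_univ (Classical.arbitrary A)))
        rw [hQbar h hh1 hhH x _]
        refine le_min (by positivity) (add_nonneg (hc0 x _) ?_)
        exact Finset.sum_nonneg fun y _ => mul_nonneg ((hPhat x _).1 y) (ihVbar0 y)
      -- part F
      have hF : ∀ x, V h x - Vπ h x ≤ (1 + 1/(H:ℝ)) ^ (H + 1 - h) * Vbar h x := by
        intro x
        set a := π h x with ha
        set κ' : ℝ := (1 + 1/(H:ℝ)) ^ (H + 1 - (h+1)) with hκ'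
        have hexp : H + 1 - h = (H + 1 - (h+1)) + 1 := by omega
        have hκ'0 : (1:ℝ) ≤ κ' := one_le_pow₀ hκ1
        have hκeq : (1 + 1/(H:ℝ)) ^ (H + 1 - h) = κ' * (1 + 1/(H:ℝ)) := by
          rw [hexp, pow_succ]
        have hκ0 : (1:ℝ) ≤ (1 + 1/(H:ℝ)) ^ (H + 1 - h) :=
          one_le_pow₀ hκ1
        -- concentration facts
        have hb1 := (abs_le.mp (hconc_b h hh1 hhH x a)).2
        have hlo := hconc_lo h hh1 hhH x a (fun y => Vπ (h+1) y) (fun y => Vstar (h+1) y)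
          ihVπ0 ihVπle ihVsH
        have hlo1 := (abs_le.mp hlo).1
        -- sum rewrites
        have e1 : ∑ y, (Phat x a y - P x a y) * Vstar (h+1) y
            = ∑ y, Phat x a y * Vstar (h+1) y - ∑ y, P x a y * Vstar (h+1) y := by
          rw [← Finset.sum_sub_distrib]
          exact Finset.sum_congr rfl fun y _ => by ring
        have e2 : ∑ y, (Phat x a y - P x a y) * (Vstar (h+1) y - Vπ (h+1) y)
            = ((∑ y, Phat x a y * Vstar (h+1) y) - (∑ y, Phat x a y * Vπ (h+1) y))
              - ((∑ y, P x a y * Vstar (h+1) y) - (∑ y, P x a y * Vπ (h+1) y)) := by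
          rw [← Finset.sum_sub_distrib, ← Finset.sum_sub_distrib, ← Finset.sum_sub_distrib]
          exact Finset.sum_congr rfl fun y _ => by ring
        have e4 : ∑ y, Phat x a y * (Vstar (h+1) y - Vπ (h+1) y)
            = (∑ y, Phat x a y * Vstar (h+1) y) - (∑ y, Phat x a y * Vπ (h+1) y) := by
          rw [← Finset.sum_sub_distrib]
          exact Finset.sum_congr rfl fun y _ => by ring
        rw [e1] at hb1
        rw [e2, e4] at hlo1
        -- monotonicity facts
        have m1 : ∑ y, Phat x a y * Vstar (h+1) y ≤ ∑ y, Phat x a y * V (h+1) y :=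
          Finset.sum_le_sum fun y _ => mul_le_mul_of_nonneg_left (ihopt y) ((hPhat x a).1 y)
        have m2 : ∑ y, Phat x a y * V (h+1) y - ∑ y, Phat x a y * Vπ (h+1) y
            ≤ κ' * ∑ y, Phat x a y * Vbar (h+1) y := by
          rw [← Finset.sum_sub_distrib, Finset.mul_sum]
          apply Finset.sum_le_sum
          intro y _
          have : Phat x a y * V (h+1) y - Phat x a y * Vπ (h+1) y
              = Phat x a y * (V (h+1) y - Vπ (h+1) y) := by ring
          rw [this, mul_comm (κ' ) _, mul_assoc]
          exact mul_le_mul_of_nonneg_left (by rw [mul_comm]; exact ihmain y) ((hPhat x a).1 y)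
        have mbar0 : (0:ℝ) ≤ ∑ y, Phat x a y * Vbar (h+1) y :=
          Finset.sum_nonneg fun y _ => mul_nonneg ((hPhat x a).1 y) (ihVbar0 y)
        have mπ0 : ∑ y, Phat x a y * Vπ (h+1) y ≤ ∑ y, Phat x a y * V (h+1) y :=
          Finset.sum_le_sum fun y _ => mul_le_mul_of_nonneg_left
            (le_trans (ihVπle y) (ihopt y)) ((hPhat x a).1 y)
        -- value identities
        have hVhx : V h x = Q h x a := (hπ h hh1 hhH x).symm
        have hQle : Q h x a ≤ r h x a + b x a + ∑ y, Phat x a y * V (h+1) y := by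
          rw [hQ h hh1 hhH x a]; exact min_le_right _ _
        have hQleH : Q h x a ≤ (H:ℝ) := by
          rw [hQ h hh1 hhH x a]; exact min_le_left _ _
        have hVπx : Vπ h x = r h x a + ∑ y, P x a y * Vπ (h+1) y := hVπ h hh1 hhH x
        -- key bound: V h x - Vπ h x ≤ c + (1+1/H) * T
        have hKb := hK0 x a
        have hcb := hc x a
        have hinvH : (0:ℝ) < 1/(H:ℝ) := by positivity
        have hmain2 : V h x - Vπ h x ≤
            c x a + (1 + 1/(H:ℝ)) * κ' * ∑ y, Phat x a y * Vbar (h+1) y := by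
          have step : V h x - Vπ h x ≤ c x a +
              (1 + 1/(H:ℝ)) * (∑ y, Phat x a y * V (h+1) y - ∑ y, Phat x a y * Vπ (h+1) y) := by
            have m1' : (1/(H:ℝ)) * ∑ y, Phat x a y * Vstar (h+1) y
                ≤ (1/(H:ℝ)) * ∑ y, Phat x a y * V (h+1) y :=
              mul_le_mul_of_nonneg_left m1 hinvH.le
            rw [hVhx, hVπx]
            have := hQle
            ring_nf
            ring_nf at hb1 hlo1 m1' hcb this ⊢
            linarith
          have step2 : (1 + 1/(H:ℝ)) *
              (∑ y, Phat x a y * V (h+1) y - ∑ y, Phat x a y * Vπ (h+1) y)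
              ≤ (1 + 1/(H:ℝ)) * (κ' * ∑ y, Phat x a y * Vbar (h+1) y) :=
            mul_le_mul_of_nonneg_left m2 (by linarith)
          calc V h x - Vπ h x ≤ _ := step
            _ ≤ c x a + (1 + 1/(H:ℝ)) * (κ' * ∑ y, Phat x a y * Vbar (h+1) y) := by
                linarith
            _ = c x a + (1 + 1/(H:ℝ)) * κ' * ∑ y, Phat x a y * Vbar (h+1) y := by ring
        -- now compare with κ * Qbar
        have hQbareq := hQbar h hh1 hhH x a
        have hfinal : V h x - Vπ h x ≤
            (1 + 1/(H:ℝ)) ^ (H + 1 - h) * Qbar h x a := by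
          rw [hQbareq]
          rcases le_total ((H:ℝ)) (c x a + ∑ y, Phat x a y * Vbar (h+1) y) with hmin | hmin
          · rw [min_eq_left hmin]
            have h1 : V h x - Vπ h x ≤ (H:ℝ) := by
              have := hA x
              rw [hVhx]; linarith
            calc V h x - Vπ h x ≤ (H:ℝ) := h1
              _ ≤ (1 + 1/(H:ℝ)) ^ (H + 1 - h) * (H:ℝ) :=
                le_mul_of_one_le_left hHpos.le hκ0
          · rw [min_eq_right hmin, hκeq]
            have h11 : (1:ℝ) ≤ κ' * (1 + 1/(H:ℝ)) := by
              calc (1:ℝ) = 1 * 1 := (one_mul 1).symm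
                _ ≤ κ' * (1 + 1/(H:ℝ)) :=
                  mul_le_mul hκ'0 hκ1 zero_le_one (le_trans zero_le_one hκ'0)
            have hκc : c x a ≤ κ' * (1 + 1/(H:ℝ)) * c x a :=
              le_mul_of_one_le_left (hc0 x a) h11
            calc V h x - Vπ h x
                ≤ c x a + (1 + 1/(H:ℝ)) * κ' * ∑ y, Phat x a y * Vbar (h+1) y := hmain2
              _ ≤ κ' * (1 + 1/(H:ℝ)) * c x a
                  + κ' * (1 + 1/(H:ℝ)) * ∑ y, Phat x a y * Vbar (h+1) y := by
                  linarith
              _ = κ' * (1 + 1/(H:ℝ)) * (c x a + ∑ y, Phat x a y * Vbar (h+1) y) := by ring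
        refine le_trans hfinal ?_
        apply mul_le_mul_of_nonneg_left _ (by positivity)
        rw [hVbar h hh1 hhH x]
        exact Finset.le_sup' _ (Finset.mem_univ a)
      exact ⟨hA, hB, hC, hD', hD, hE, hF⟩
  have main : ∀ h, 1 ≤ h → h ≤ H + 1 → ∀ x,
      V h x - Vπ h x ≤ (1 + 1 / (H : ℝ)) ^ (H + 1 - h) * Vbar h x := by
    intro h hh1 hh2 x
    exact (key (H + 1 - h) h (by omega) hh1).2.2.2.2.2.2 x
  refine ⟨main, ?_⟩
  intro x1
  have h1 := main 1 le_rfl (by omega) x1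
  have hVbar0 : 0 ≤ Vbar 1 x1 := (key H 1 (by omega) le_rfl).2.2.2.2.2.1 x1
  have hexp1 : H + 1 - 1 = H := by omega
  rw [hexp1] at h1
  have hpe : (1 + 1/(H:ℝ)) ^ H ≤ Real.exp 1 := by
    have ha : (1 + 1/(H:ℝ)) ≤ Real.exp (1/(H:ℝ)) := by
      have := Real.add_one_le_exp (1/(H:ℝ))
      linarith
    have hb2 : (1 + 1/(H:ℝ)) ^ H ≤ (Real.exp (1/(H:ℝ))) ^ H :=
      pow_le_pow_left₀ (by positivity) ha H
    have hc2 : (Real.exp (1/(H:ℝ))) ^ H = Real.exp ((H:ℝ) * (1/(H:ℝ))) := by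
      rw [← Real.exp_nat_mul]
    rw [hc2, mul_one_div, div_self hHpos.ne'] at hb2
    exact hb2
  calc V 1 x1 - Vπ 1 x1 ≤ (1 + 1/(H:ℝ)) ^ H * Vbar 1 x1 := h1
    _ ≤ Real.exp 1 * Vbar 1 x1 := mul_le_mul_of_nonneg_right hpe hVbar0
end
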